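/- arXiv:2112.14935 — 6 statements merged into one kernel-verified Lean document; each statement's English description precedes it below -/
import Mathlib

section
/- For every n ≥ 3, the Lagrangian of the 3-graph B(2, n−2) satisfies λ(B(2, n−2)) ≤ √3/18, and moreover λ(B(2, n−2)) → √3/18 as n → ∞. -/
open Finset

/-- An `r`-uniform hypergraph (r-graph) with vertices drawn from `ℕ`. -/
structure HyperGraph (r : ℕ) where
  verts : Finset ℕ
  edges : Finset (Finset ℕ)
  edges_sub : ∀ e ∈ edges, e ⊆ verts
  card_eq : ∀ e ∈ edges, e.card = r

/-- A 3-uniform hypergraph (3-graph). -/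
abbrev ThreeGraph := HyperGraph 3

/-- A feasible weight vector on `G`: nonnegative weights on the vertices summing to 1. -/
def HyperGraph.IsFeasible {r : ℕ} (G : HyperGraph r) (w : ℕ → ℝ) : Prop :=
  (∀ v ∈ G.verts, 0 ≤ w v) ∧ ∑ v ∈ G.verts, w v = 1

/-- The Lagrangian function `λ(G, w) = Σ_{e ∈ E(G)} Π_{v ∈ e} w v`. -/
noncomputable def HyperGraph.lagFun {r : ℕ} (G : HyperGraph r) (w : ℕ → ℝ) : ℝ :=
  ∑ e ∈ G.edges, ∏ v ∈ e, w v

/-- The Lagrangian `λ(G)`: the maximum of `λ(G, w)` over feasible weight vectors. -/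
noncomputable def HyperGraph.lag {r : ℕ} (G : HyperGraph r) : ℝ :=
  sSup {x : ℝ | ∃ w, G.IsFeasible w ∧ G.lagFun w = x}

/-- `G` contains a copy of `F`: an injection of the vertices of `F` into those of `G`
mapping every edge of `F` to an edge of `G`. -/
def HyperGraph.ContainsCopy {r : ℕ} (G F : HyperGraph r) : Prop :=
  ∃ f : ℕ → ℕ, Set.InjOn f ↑F.verts ∧ (∀ v ∈ F.verts, f v ∈ G.verts) ∧
    ∀ e ∈ F.edges, e.image f ∈ G.edges

/-- `G` is `F`-free. -/
def HyperGraph.Free {r : ℕ} (G F : HyperGraph r) : Prop := ¬ G.ContainsCopy F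

/-- `H` is a subgraph of `G`. -/
def HyperGraph.IsSubgraph {r : ℕ} (H G : HyperGraph r) : Prop :=
  H.verts ⊆ G.verts ∧ H.edges ⊆ G.edges

/-- `G` is dense: every proper subgraph has strictly smaller Lagrangian. -/
def HyperGraph.LagDense {r : ℕ} (G : HyperGraph r) : Prop :=
  ∀ H : HyperGraph r, H.IsSubgraph G → (H.verts ≠ G.verts ∨ H.edges ≠ G.edges) →
    H.lag < G.lag

/-- The Lagrangian density `π_λ(F) = sup { r! · λ(G) : G is F-free }`. -/
noncomputable def lagDensity {r : ℕ} (F : HyperGraph r) : ℝ :=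
  sSup {x : ℝ | ∃ G : HyperGraph r, G.Free F ∧ x = (Nat.factorial r : ℝ) * G.lag}

/-- An optimum weight vector for `G`. -/
def HyperGraph.IsOptimal {r : ℕ} (G : HyperGraph r) (w : ℕ → ℝ) : Prop :=
  G.IsFeasible w ∧ G.lagFun w = G.lag

/-- `K_4^3 ∪ e`: the disjoint union of the complete 3-graph on `{1,2,3,4}`
and the single edge `{5,6,7}`. -/
def K43e : ThreeGraph where
  verts := {1, 2, 3, 4, 5, 6, 7}
  edges := {{1, 2, 3}, {1, 2, 4}, {1, 3, 4}, {2, 3, 4}, {5, 6, 7}}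
  edges_sub := by decide
  card_eq := by decide

/-- `B(2, n-2)`: the 3-graph on `{1, …, n}` whose edges are the 3-element subsets
meeting `{1, 2}`. -/
def B2 (n : ℕ) : ThreeGraph where
  verts := Finset.Icc 1 n
  edges := ((Finset.Icc 1 n).powersetCard 3).filter
    (fun e => (e ∩ ({1, 2} : Finset ℕ)).Nonempty)
  edges_sub := by
    intro e he
    rw [Finset.mem_filter, Finset.mem_powersetCard] at he
    exact he.1.1
  card_eq := by
    intro e he
    rw [Finset.mem_filter, Finset.mem_powersetCard] at he
    exact he.1.2

/-!
Write `a, b` for the weights of `1, 2` and `T` for the total weight of `{3, …, n}`. Every edge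
meets `{1, 2}`, so `λ = abT + (a + b) e₂`, where `e₂ ≤ T²/2` is the second elementary symmetric
function of the weights on `{3, …, n}`. With `ab ≤ (a + b)²/4` and `a + b = 1 - T` this gives
`λ ≤ (T - T³)/4 ≤ √3/18`, with equality at `T = √3/3`. Spreading `√3/3` evenly over
`{3, …, n}` and splitting the rest evenly between `1` and `2` attains `√3/18 - O(1/n)`.
-/

namespace Finset

variable {α R : Type*}

theorem sum_powersetCard_succ_insert_prod [DecidableEq α] [CommSemiring R] {a : α}
    {s : Finset α} (ha : a ∉ s) (k : ℕ) (w : α → R) :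
    ∑ t ∈ (insert a s).powersetCard (k + 1), ∏ v ∈ t, w v =
      ∑ t ∈ s.powersetCard (k + 1), ∏ v ∈ t, w v +
        w a * ∑ t ∈ s.powersetCard k, ∏ v ∈ t, w v := by
  have hnot : ∀ t ∈ s.powersetCard k, a ∉ t := fun t ht =>
    notMem_mono (mem_powersetCard.1 ht).1 ha
  rw [powersetCard_succ_insert ha, sum_union, sum_image, mul_sum]
  · exact congrArg _ (sum_congr rfl fun t ht => prod_insert (hnot t ht))
  · exact insert_erase_invOn.2.injOn.mono hnot
  · simp only [disjoint_left, mem_powersetCard, mem_image, not_exists, not_and]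
    rintro _ ⟨hts, -⟩ t - rfl
    exact ha (hts (mem_insert_self a t))

theorem sum_powersetCard_one_prod [CommSemiring R] (s : Finset α) (w : α → R) :
    ∑ t ∈ s.powersetCard 1, ∏ v ∈ t, w v = ∑ v ∈ s, w v := by
  simp [powersetCard_one]

theorem two_mul_sum_powersetCard_two_prod [CommRing R] (s : Finset α) (w : α → R) :
    2 * ∑ t ∈ s.powersetCard 2, ∏ v ∈ t, w v = (∑ v ∈ s, w v) ^ 2 - ∑ v ∈ s, w v ^ 2 := by
  classical
  induction s using Finset.induction_on with
  | empty => simp [powersetCard_eq_empty.2 (show (∅ : Finset α).card < 2 by simp)]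
  | insert a s ha ih =>
    rw [sum_powersetCard_succ_insert_prod ha, sum_powersetCard_one_prod, sum_insert ha,
      sum_insert ha]
    linear_combination ih

end Finset

namespace HyperGraph

variable {r : ℕ} {G : HyperGraph r} {w : ℕ → ℝ}

theorem IsFeasible.le_one (hw : G.IsFeasible w) {v : ℕ} (hv : v ∈ G.verts) : w v ≤ 1 :=
  hw.2 ▸ single_le_sum hw.1 hv

theorem IsFeasible.lagFun_le_card_edges (hw : G.IsFeasible w) : G.lagFun w ≤ #G.edges := by
  rw [lagFun, card_eq_sum_ones, Nat.cast_sum, Nat.cast_one]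
  refine sum_le_sum fun e he => prod_le_one (fun v hv => hw.1 v (G.edges_sub e he hv))
    fun v hv => hw.le_one (G.edges_sub e he hv)

theorem lagFun_le_lag (hw : G.IsFeasible w) : G.lagFun w ≤ G.lag :=
  le_csSup ⟨#G.edges, by rintro _ ⟨w', hw', rfl⟩; exact hw'.lagFun_le_card_edges⟩ ⟨w, hw, rfl⟩

theorem lag_le {c : ℝ} (hc : 0 ≤ c) (h : ∀ w, G.IsFeasible w → G.lagFun w ≤ c) : G.lag ≤ c :=
  Real.sSup_le (by rintro _ ⟨w, hw, rfl⟩; exact h w hw) hc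

end HyperGraph

theorem mul_mul_add_mul_le_sqrt_three_div_eighteen {a b T P : ℝ} (ha : 0 ≤ a) (hb : 0 ≤ b)
    (hT : 0 ≤ T) (hsum : a + b + T = 1) (hP : P ≤ T ^ 2 / 2) :
    a * b * T + (a + b) * P ≤ √3 / 18 := by
  have h3 : √3 ^ 2 = 3 := Real.sq_sqrt (by norm_num)
  calc a * b * T + (a + b) * P ≤ (a + b) ^ 2 / 4 * T + (a + b) * (T ^ 2 / 2) := by
        gcongr
        nlinarith [sq_nonneg (a - b)]
    _ = (T - T ^ 3) / 4 := by rw [show a + b = 1 - T by linarith]; ring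
    _ ≤ √3 / 18 := by
        have hgap : √3 / 18 - (T - T ^ 3) / 4 = (3 * T - √3) ^ 2 * (3 * T + 2 * √3) / 108 := by
          linear_combination (T / 12 - √3 / 54) * h3
        have : 0 ≤ (3 * T - √3) ^ 2 * (3 * T + 2 * √3) / 108 := by positivity
        linarith

theorem Icc_one_eq_insert_insert_Icc_three {n : ℕ} (hn : 2 ≤ n) :
    Icc 1 n = insert 1 (insert 2 (Icc 3 n)) := by
  ext v
  simp only [mem_Icc, mem_insert]
  omega

namespace B2

theorem lagFun_eq {n : ℕ} (hn : 2 ≤ n) (w : ℕ → ℝ) :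
    (B2 n).lagFun w = w 1 * w 2 * ∑ v ∈ Icc 3 n, w v +
      (w 1 + w 2) * ∑ t ∈ (Icc 3 n).powersetCard 2, ∏ v ∈ t, w v := by
  have h1 : 1 ∉ insert 2 (Icc 3 n) := by simp
  have h2 : 2 ∉ Icc 3 n := by simp
  have hmissing : ((Icc 1 n).powersetCard 3).filter (fun e => ¬ (e ∩ {1, 2}).Nonempty) =
      (Icc 3 n).powersetCard 3 := by
    ext e
    simp only [mem_filter, mem_powersetCard, not_nonempty_iff_eq_empty,
      ← disjoint_iff_inter_eq_empty, subset_iff, disjoint_left, mem_Icc, mem_insert,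
      mem_singleton]
    constructor
    · rintro ⟨⟨hsub, hcard⟩, hdisj⟩
      exact ⟨fun v hv => by have := hsub hv; have := hdisj hv; omega, hcard⟩
    · rintro ⟨hsub, hcard⟩
      exact ⟨⟨fun v hv => by have := hsub hv; omega, hcard⟩, fun v hv => by
        have := hsub hv; omega⟩
  have htotal := sum_filter_add_sum_filter_not ((Icc 1 n).powersetCard 3)
    (fun e => (e ∩ {1, 2}).Nonempty) (fun e => ∏ v ∈ e, w v)
  rw [hmissing, Icc_one_eq_insert_insert_Icc_three hn, sum_powersetCard_succ_insert_prod h1,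
    sum_powersetCard_succ_insert_prod h2, sum_powersetCard_succ_insert_prod h2,
    sum_powersetCard_one_prod] at htotal
  show ∑ e ∈ ((Icc 1 n).powersetCard 3).filter (fun e => (e ∩ {1, 2}).Nonempty), _ = _
  rw [Icc_one_eq_insert_insert_Icc_three hn]
  linear_combination htotal

theorem lagFun_le {n : ℕ} (hn : 2 ≤ n) {w : ℕ → ℝ} (hw : (B2 n).IsFeasible w) :
    (B2 n).lagFun w ≤ √3 / 18 := by
  obtain ⟨hnonneg, hsum⟩ := hw
  simp only [B2, Icc_one_eq_insert_insert_Icc_three hn, mem_insert] at hnonneg hsum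
  rw [sum_insert (by simp), sum_insert (by simp), ← add_assoc] at hsum
  have hpairs := two_mul_sum_powersetCard_two_prod (Icc 3 n) w
  have hsq : 0 ≤ ∑ v ∈ Icc 3 n, w v ^ 2 := sum_nonneg fun v _ => sq_nonneg (w v)
  rw [lagFun_eq hn]
  exact mul_mul_add_mul_le_sqrt_three_div_eighteen (hnonneg 1 (by simp)) (hnonneg 2 (by simp))
    (sum_nonneg fun v hv => hnonneg v (by simp [hv])) hsum (by linarith)

noncomputable def weight (n v : ℕ) : ℝ :=
  if v ≤ 2 then (1 - √3 / 3) / 2 else if v ≤ n then √3 / 3 / (n - 2) else 0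

theorem weight_of_le_two {n v : ℕ} (hv : v ≤ 2) : weight n v = (1 - √3 / 3) / 2 :=
  if_pos hv

theorem weight_of_mem_Icc_three {n v : ℕ} (hv : v ∈ Icc 3 n) :
    weight n v = √3 / 3 / (n - 2) := by
  rw [mem_Icc] at hv
  rw [weight, if_neg (by omega), if_pos hv.2]

theorem sum_weight_Icc_three {n : ℕ} (hn : 3 ≤ n) : ∑ v ∈ Icc 3 n, weight n v = √3 / 3 := by
  have hcard : ((Icc 3 n).card : ℝ) = n - 2 := by
    rw [Nat.card_Icc, Nat.cast_sub (by omega)]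
    push_cast
    ring
  have hpos : (n : ℝ) - 2 ≠ 0 := by
    have : (3 : ℝ) ≤ n := by exact_mod_cast hn
    linarith
  rw [sum_congr rfl fun v => weight_of_mem_Icc_three, sum_const, nsmul_eq_mul, hcard]
  field_simp

theorem isFeasible_weight {n : ℕ} (hn : 3 ≤ n) : (B2 n).IsFeasible (weight n) := by
  have h3 : √3 ≤ 3 := by
    rw [Real.sqrt_le_left (by norm_num)]; norm_num
  refine ⟨fun v _ => ?_, ?_⟩
  · have : (2 : ℝ) ≤ n := by exact_mod_cast (by omega : 2 ≤ n)
    unfold weight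
    split_ifs
    · linarith
    · exact div_nonneg (by positivity) (by linarith)
    · rfl
  · simp only [B2, Icc_one_eq_insert_insert_Icc_three (by omega : 2 ≤ n)]
    rw [sum_insert (by simp), sum_insert (by simp), sum_weight_Icc_three hn,
      weight_of_le_two (by norm_num), weight_of_le_two (by norm_num)]
    ring

theorem lagFun_weight {n : ℕ} (hn : 3 ≤ n) :
    (B2 n).lagFun (weight n) = √3 / 18 - (1 - √3 / 3) / 6 / (n - 2) := by
  have h3 : √3 ^ 2 = 3 := Real.sq_sqrt (by norm_num)
  have hsq : ∑ v ∈ Icc 3 n, weight n v ^ 2 = 1 / 3 / (n - 2) :=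
    calc ∑ v ∈ Icc 3 n, weight n v ^ 2 = ∑ v ∈ Icc 3 n, √3 / 3 / (n - 2) * weight n v :=
          sum_congr rfl fun v hv => by rw [sq, weight_of_mem_Icc_three hv]
      _ = 1 / 3 / (n - 2) := by
          rw [← mul_sum, sum_weight_Icc_three hn]
          linear_combination h3 / 9 / (n - 2)
  have hpairs := two_mul_sum_powersetCard_two_prod (Icc 3 n) (weight n)
  rw [sum_weight_Icc_three hn, hsq] at hpairs
  rw [lagFun_eq (by omega), sum_weight_Icc_three hn, weight_of_le_two (by norm_num),
    weight_of_le_two (by norm_num)]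
  linear_combination (1 - √3 / 3) / 2 * hpairs - √3 / 108 * h3

theorem lag_le {n : ℕ} (hn : 2 ≤ n) : (B2 n).lag ≤ √3 / 18 :=
  HyperGraph.lag_le (by positivity) fun _ hw => lagFun_le hn hw

theorem le_lag {n : ℕ} (hn : 3 ≤ n) :
    √3 / 18 - (1 - √3 / 3) / 6 / (n - 2) ≤ (B2 n).lag :=
  lagFun_weight hn ▸ HyperGraph.lagFun_le_lag (isFeasible_weight hn)

end B2

/-- For every `n ≥ 3`, `λ(B(2, n-2)) ≤ √3/18`, and `λ(B(2, n-2)) → √3/18` as `n → ∞`. -/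
theorem lag_B2 :
    (∀ n : ℕ, 3 ≤ n → (B2 n).lag ≤ Real.sqrt 3 / 18) ∧
    Filter.Tendsto (fun n : ℕ => (B2 n).lag) Filter.atTop (nhds (Real.sqrt 3 / 18)) := by
  refine ⟨fun n hn => B2.lag_le (by omega), ?_⟩
  have hdenom : Filter.Tendsto (fun n : ℕ => (n : ℝ) - 2) Filter.atTop Filter.atTop :=
    Filter.tendsto_atTop_add_const_right _ (-2) tendsto_natCast_atTop_atTop
  have hlower : Filter.Tendsto (fun n : ℕ => √3 / 18 - (1 - √3 / 3) / 6 / ((n : ℝ) - 2))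
      Filter.atTop (nhds (√3 / 18)) := by
    simpa using tendsto_const_nhds.sub (tendsto_const_nhds.div_atTop hdenom)
  refine tendsto_of_tendsto_of_tendsto_of_le_of_le' hlower tendsto_const_nhds ?_ ?_
  · filter_upwards [Filter.eventually_ge_atTop 3] with n hn using B2.le_lag hn
  · filter_upwards [Filter.eventually_ge_atTop 2] with n hn using B2.lag_le hn
end

section
/- For every n ≥ 6, the 3-graph H_1 satisfies λ(H_1) < √3/18, where H_1 is the 3-graph on vertex set [n] whose edge set is ( {e ⊆ [n] : |e|=3, e ∩ {1,2} ≠ ∅} \ {{2,i,j} : i,j ∈ [n]\{1,2,3,4,5,6}} ) ∪ {{3,4,5},{3,4,6}}. -/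
open Finset

/-- `H_1` (for `n ≥ 6`): the 3-graph on `[n]` whose edges are the 3-subsets meeting
`{1, 2}`, minus all edges `{2, i, j}` with `i, j ∈ [n] \ {1,…,6}`, plus the two edges
`{3,4,5}` and `{3,4,6}`. -/
def H1 (n : ℕ) (hn : 6 ≤ n) : ThreeGraph where
  verts := Finset.Icc 1 n
  edges := ((((Finset.Icc 1 n).powersetCard 3).filter
        (fun e => (e ∩ ({1, 2} : Finset ℕ)).Nonempty)) \
      (((Finset.Icc 1 n \ ({1, 2, 3, 4, 5, 6} : Finset ℕ)).powersetCard 2).image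
        (insert 2))) ∪
    ({{3, 4, 5}, {3, 4, 6}} : Finset (Finset ℕ))
  edges_sub := by
    intro e he
    rw [Finset.mem_union] at he
    rcases he with h | h
    · have h' := (Finset.mem_sdiff.mp h).1
      rw [Finset.mem_filter, Finset.mem_powersetCard] at h'
      exact h'.1.1
    · simp only [Finset.mem_insert, Finset.mem_singleton] at h
      rcases h with rfl | rfl <;> intro v hv <;>
        simp only [Finset.mem_insert, Finset.mem_singleton] at hv <;>
        rw [Finset.mem_Icc] <;> rcases hv with rfl | rfl | rfl <;> omega
  card_eq := by
    intro e he
    rw [Finset.mem_union] at he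
    rcases he with h | h
    · have h' := (Finset.mem_sdiff.mp h).1
      rw [Finset.mem_filter, Finset.mem_powersetCard] at h'
      exact h'.1.2
    · simp only [Finset.mem_insert, Finset.mem_singleton] at h
      rcases h with rfl | rfl <;> decide

/-! Group the vertices of `H₁` as `1`, `2`, `{3,4,5,6}` (total weight `t`) and `{7,…,n}` (total
weight `u`). The Lagrangian function is then
`w₁w₂(t + u) + (w₁ + w₂)(e₂(w₃,…,w₆) + tu) + w₁ e₂(w₇,…,wₙ) + w₃w₄(w₅ + w₆)`.
Bounding `e₂(w₃,…,w₆) ≤ 3t²/8`, `e₂(w₇,…,wₙ) ≤ u²/2` and `w₃w₄(w₅ + w₆) ≤ t³/27` (AM–GM) leaves a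
cubic in `w₁, w₂, t, u` on the simplex, which stays below `19/200 < √3/18`. -/

lemma HyperGraph.lag_le_of_forall_lagFun_le {r : ℕ} (G : HyperGraph r) {c : ℝ} (hc : 0 ≤ c)
    (h : ∀ w, G.IsFeasible w → G.lagFun w ≤ c) : G.lag ≤ c :=
  Real.sSup_le (by rintro x ⟨w, hw, rfl⟩; exact h w hw) hc

section ElementarySymmetricSums

variable {α R : Type*}

lemma sum_powersetCard_one [CommSemiring R] (w : α → R) (s : Finset α) :
    ∑ t ∈ s.powersetCard 1, ∏ v ∈ t, w v = ∑ v ∈ s, w v := by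
  simp [powersetCard_one]

variable [DecidableEq α]

lemma sum_image_insert_powersetCard [CommSemiring R] (w : α → R) {x : α} {s : Finset α}
    (hx : x ∉ s) (k : ℕ) :
    ∑ t ∈ (s.powersetCard k).image (insert x), ∏ v ∈ t, w v =
      w x * ∑ t ∈ s.powersetCard k, ∏ v ∈ t, w v := by
  have hxt : ∀ t ∈ s.powersetCard k, x ∉ t := fun t ht h => hx ((mem_powersetCard.1 ht).1 h)
  rw [sum_image, mul_sum]
  · exact sum_congr rfl fun t ht => prod_insert (hxt t ht)
  · intro t ht t' ht' h
    rw [← erase_insert (hxt t ht), ← erase_insert (hxt t' ht'), h]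

lemma sum_powersetCard_succ_insert [CommSemiring R] (w : α → R) {x : α} {s : Finset α}
    (hx : x ∉ s) (k : ℕ) :
    ∑ t ∈ (insert x s).powersetCard (k + 1), ∏ v ∈ t, w v =
      w x * ∑ t ∈ s.powersetCard k, ∏ v ∈ t, w v +
        ∑ t ∈ s.powersetCard (k + 1), ∏ v ∈ t, w v := by
  rw [powersetCard_succ_insert hx, sum_union, sum_image_insert_powersetCard w hx, add_comm]
  refine disjoint_right.2 fun _ ht' ht => ?_
  obtain ⟨t, -, rfl⟩ := mem_image.1 ht'
  exact hx ((mem_powersetCard.1 ht).1 (mem_insert_self x t))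

lemma two_mul_sum_powersetCard_two_le_sq [CommRing R] [LinearOrder R] [IsStrictOrderedRing R]
    (w : α → R) (s : Finset α) :
    2 * ∑ t ∈ s.powersetCard 2, ∏ v ∈ t, w v ≤ (∑ v ∈ s, w v) ^ 2 := by
  induction s using Finset.induction_on with
  | empty => simp [powersetCard_eq_empty.2 (card_empty.trans_lt two_pos)]
  | insert x s hx ih =>
    rw [sum_powersetCard_succ_insert w hx, sum_powersetCard_one, sum_insert hx]
    nlinarith [sq_nonneg (w x)]

lemma filter_powersetCard_inter_nonempty (s t : Finset α) (k : ℕ) :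
    (s.powersetCard k).filter (fun e => (e ∩ t).Nonempty) =
      s.powersetCard k \ (s \ t).powersetCard k := by
  ext e
  simp only [mem_filter, mem_sdiff, mem_powersetCard, subset_sdiff,
    ← not_disjoint_iff_nonempty_inter]
  tauto

end ElementarySymmetricSums

lemma H1_lagFun_eq_sum_powersetCard (n : ℕ) (hn : 6 ≤ n) (w : ℕ → ℝ) :
    (H1 n hn).lagFun w =
      ∑ t ∈ (Icc 1 n).powersetCard 3, ∏ v ∈ t, w v - ∑ t ∈ (Icc 3 n).powersetCard 3, ∏ v ∈ t, w v
        - w 2 * ∑ t ∈ (Icc 7 n).powersetCard 2, ∏ v ∈ t, w v + w 3 * w 4 * (w 5 + w 6) := by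
  have hC : Disjoint
      (((Icc 1 n).powersetCard 3).filter (fun e => (e ∩ ({1, 2} : Finset ℕ)).Nonempty) \
        ((Icc 1 n \ {1, 2, 3, 4, 5, 6}).powersetCard 2).image (insert 2))
      {{3, 4, 5}, {3, 4, 6}} := by
    refine disjoint_right.2 fun e he hmem => ?_
    have := (mem_filter.1 (mem_sdiff.1 hmem).1).2
    simp only [mem_insert, mem_singleton] at he
    rcases he with rfl | rfl <;> exact absurd this (by decide)
  have h12 : Icc 1 n \ {1, 2} = Icc 3 n := by ext; simp; omega
  have h7 : Icc 1 n \ {1, 2, 3, 4, 5, 6} = Icc 7 n := by ext; simp; omega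
  have hB : ((Icc 7 n).powersetCard 2).image (insert 2) ⊆
      (Icc 1 n).powersetCard 3 \ (Icc 3 n).powersetCard 3 := by
    intro e he
    obtain ⟨p, hp, rfl⟩ := mem_image.1 he
    rw [mem_powersetCard] at hp
    have h2p : 2 ∉ p := fun h => by simpa using hp.1 h
    refine mem_sdiff.2 ⟨mem_powersetCard.2 ⟨insert_subset (by simp; omega) ?_, ?_⟩, ?_⟩
    · exact hp.1.trans (Icc_subset_Icc (by norm_num) le_rfl)
    · rw [card_insert_of_notMem h2p, hp.2]
    · exact fun h => by simpa using (mem_powersetCard.1 h).1 (mem_insert_self 2 p)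
  rw [HyperGraph.lagFun]
  dsimp only [H1]
  rw [sum_union hC, filter_powersetCard_inter_nonempty, h12, h7, sum_sdiff_eq_sub hB,
    sum_sdiff_eq_sub (powersetCard_mono (Icc_subset_Icc (by norm_num) le_rfl)),
    sum_image_insert_powersetCard w (by simp), sum_pair (by decide)]
  simp (disch := decide) only [prod_insert, prod_singleton]
  ring

lemma H1_lagFun_eq (n : ℕ) (hn : 6 ≤ n) (w : ℕ → ℝ) :
    (H1 n hn).lagFun w =
      w 1 * w 2 * (w 3 + w 4 + w 5 + w 6 + ∑ v ∈ Icc 7 n, w v)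
        + (w 1 + w 2) * (w 3 * w 4 + w 3 * w 5 + w 3 * w 6 + w 4 * w 5 + w 4 * w 6 + w 5 * w 6
          + (w 3 + w 4 + w 5 + w 6) * ∑ v ∈ Icc 7 n, w v)
        + w 1 * ∑ t ∈ (Icc 7 n).powersetCard 2, ∏ v ∈ t, w v + w 3 * w 4 * (w 5 + w 6) := by
  have h1 : Icc 1 n = insert 1 (insert 2 (Icc 3 n)) := by ext; simp; omega
  have h3 : Icc 3 n = insert 3 (insert 4 (insert 5 (insert 6 (Icc 7 n)))) := by ext; simp; omega
  rw [H1_lagFun_eq_sum_powersetCard, h1, h3]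
  simp (disch := simp) only [sum_powersetCard_succ_insert, zero_add, sum_powersetCard_one,
    powersetCard_zero, sum_singleton, prod_empty]
  ring

lemma mul_mul_le_add_add_pow_three_div {x y z : ℝ} (hx : 0 ≤ x) (hy : 0 ≤ y) (hz : 0 ≤ z) :
    x * y * z ≤ (x + y + z) ^ 3 / 27 := by
  nlinarith [mul_nonneg (add_nonneg (add_nonneg hx hy) hz)
    (add_nonneg (add_nonneg (sq_nonneg (x - y)) (sq_nonneg (y - z))) (sq_nonneg (x - z))),
    mul_nonneg hx (sq_nonneg (y - z)), mul_nonneg hy (sq_nonneg (x - z)),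
    mul_nonneg hz (sq_nonneg (x - y))]

-- `19/200 (a + b + t + u)³` minus the left side is a nonnegative combination of the listed terms.
lemma H1_reduced_le {a b t u : ℝ} (ha : 0 ≤ a) (hb : 0 ≤ b) (ht : 0 ≤ t) (hu : 0 ≤ u)
    (hs : a + b + t + u = 1) :
    a * b * (t + u) + (a + b) * (3 * t ^ 2 / 8 + t * u) + a * (u ^ 2 / 2) + t ^ 3 / 27
      ≤ 19 / 200 := by
  have hcube : (a + b + t + u) ^ 3 = 1 := by rw [hs]; norm_num
  linarith [mul_nonneg ha (sq_nonneg (2*b - t)), mul_nonneg ha (sq_nonneg (a - 2*b + t)),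
    mul_nonneg ha (sq_nonneg (a + b - t)), mul_nonneg ha (sq_nonneg (2*a - b)),
    mul_nonneg hb (sq_nonneg (2*b - t)), mul_nonneg hb (sq_nonneg (a + b - t)),
    mul_nonneg hb (sq_nonneg (2*a - t)), mul_nonneg hb (sq_nonneg (2*a + 2*b - t - u)),
    mul_nonneg (mul_nonneg ha ha) hu,
    mul_nonneg ht (sq_nonneg (a - 2*b + u)), mul_nonneg ht (sq_nonneg (a + b - u)),
    mul_nonneg ht (sq_nonneg (a + 2*b - t - u)), mul_nonneg ht (sq_nonneg (a + 2*b - 2*u)),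
    mul_nonneg ht (sq_nonneg (2*a - u)), mul_nonneg ht (sq_nonneg (2*a + 2*b - t - 2*u)),
    mul_nonneg hu (sq_nonneg (a - b - t - u)), mul_nonneg hu (sq_nonneg (a - 2*b)),
    mul_nonneg hu (sq_nonneg (a - 2*b + t - u)), mul_nonneg hu (sq_nonneg (2*a - 2*b - 2*t - u))]

lemma H1_lagFun_le (n : ℕ) (hn : 6 ≤ n) (w : ℕ → ℝ) (hw : (H1 n hn).IsFeasible w) :
    (H1 n hn).lagFun w ≤ 19 / 200 := by
  obtain ⟨hnonneg, hsum⟩ := hw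
  have hpos : ∀ k, 1 ≤ k → k ≤ n → 0 ≤ w k := fun k h1 hk => hnonneg k (mem_Icc.2 ⟨h1, hk⟩)
  have hu : 0 ≤ ∑ v ∈ Icc 7 n, w v :=
    sum_nonneg fun v hv => hpos v (by simp at hv; omega) (mem_Icc.1 hv).2
  have htotal : w 1 + w 2 + (w 3 + w 4 + w 5 + w 6) + ∑ v ∈ Icc 7 n, w v = 1 := by
    have h1 : Icc 1 n =
        insert 1 (insert 2 (insert 3 (insert 4 (insert 5 (insert 6 (Icc 7 n)))))) := by
      ext; simp; omega
    change ∑ v ∈ Icc 1 n, w v = 1 at hsum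
    rw [h1] at hsum
    simp (disch := simp) only [sum_insert] at hsum
    linarith
  have hw1 := hpos 1 le_rfl (by omega)
  have hw2 := hpos 2 (by norm_num) (by omega)
  have hw3 := hpos 3 (by norm_num) (by omega)
  have hw4 := hpos 4 (by norm_num) (by omega)
  have hw5 := hpos 5 (by norm_num) (by omega)
  have hw6 := hpos 6 (by norm_num) (by omega)
  have hpairs : 8 * (w 3 * w 4 + w 3 * w 5 + w 3 * w 6 + w 4 * w 5 + w 4 * w 6 + w 5 * w 6)
      ≤ 3 * (w 3 + w 4 + w 5 + w 6) ^ 2 := by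
    nlinarith [sq_nonneg (w 3 - w 4), sq_nonneg (w 3 - w 5), sq_nonneg (w 3 - w 6),
      sq_nonneg (w 4 - w 5), sq_nonneg (w 4 - w 6), sq_nonneg (w 5 - w 6)]
  have htriple : w 3 * w 4 * (w 5 + w 6) ≤ (w 3 + w 4 + w 5 + w 6) ^ 3 / 27 := by
    simpa only [add_assoc] using mul_mul_le_add_add_pow_three_div hw3 hw4 (add_nonneg hw5 hw6)
  have htail := two_mul_sum_powersetCard_two_le_sq w (Icc 7 n)
  rw [H1_lagFun_eq]
  linarith [H1_reduced_le hw1 hw2 (by positivity : 0 ≤ w 3 + w 4 + w 5 + w 6) hu htotal,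
    mul_le_mul_of_nonneg_left hpairs (add_nonneg hw1 hw2), mul_le_mul_of_nonneg_left htail hw1]

/-- For every `n ≥ 6`, `λ(H_1) < √3/18`. -/
theorem lag_H1 (n : ℕ) (hn : 6 ≤ n) : (H1 n hn).lag < Real.sqrt 3 / 18 := by
  have hlag := (H1 n hn).lag_le_of_forall_lagFun_le (by norm_num) (H1_lagFun_le n hn)
  have hsqrt : (19 / 200 : ℝ) < Real.sqrt 3 / 18 := by
    rw [lt_div_iff₀ (by norm_num), Real.lt_sqrt (by norm_num)]
    norm_num
  linarith
end

section
/- Let G be an r-uniform graph on vertex set [n] and let x = (x_1,...,x_n) be a feasible weight vector on G. Let i,j ∈ [n], i ≠ j, satisfy L_G(i\j) = L_G(j\i) = ∅. Define y by y_ℓ = x_ℓ for ℓ ∉ {i,j} and y_i = y_j = (x_i + x_j)/2. Then λ(G,y) ≥ λ(G,x). Moreover, if the pair {i,j} is contained in some edge of G, every coordinate of x is strictly positive, and λ(G,y) = λ(G,x), then x_i = x_j. -/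
open Finset

/-- `L_G(j \ i)`: the set of `(r-1)`-element sets `e` with `i ∉ e` such that
`e ∪ {j}` is an edge of `G` and `e ∪ {i}` is not an edge of `G`. -/
def linkDiff {r : ℕ} (G : HyperGraph r) (j i : ℕ) : Set (Finset ℕ) :=
  {e | e.card = r - 1 ∧ i ∉ e ∧ insert j e ∈ G.edges ∧ insert i e ∉ G.edges}

/-- Symmetrization does not decrease the Lagrangian function: if
`L_G(i\j) = L_G(j\i) = ∅` and `y` averages the weights of `i` and `j`, then
`λ(G, y) ≥ λ(G, x)`; moreover if `{i, j}` lies in an edge, all coordinates of `x` are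
positive and equality holds, then `x i = x j`. -/
theorem symmetrization (r n : ℕ) (G : HyperGraph r) (hG : G.verts = Finset.Icc 1 n)
    (x : ℕ → ℝ) (hx : G.IsFeasible x) (i j : ℕ) (hi : i ∈ Finset.Icc 1 n)
    (hj : j ∈ Finset.Icc 1 n) (hij : i ≠ j)
    (hL1 : linkDiff G i j = ∅) (hL2 : linkDiff G j i = ∅) :
    G.lagFun x ≤ G.lagFun (fun ℓ => if ℓ = i ∨ ℓ = j then (x i + x j) / 2 else x ℓ) ∧
    ((∃ e ∈ G.edges, i ∈ e ∧ j ∈ e) → (∀ v ∈ Finset.Icc 1 n, 0 < x v) →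
      G.lagFun (fun ℓ => if ℓ = i ∨ ℓ = j then (x i + x j) / 2 else x ℓ) = G.lagFun x →
      x i = x j) := by
  classical
  obtain ⟨hx0, -⟩ := hx
  set y : ℕ → ℝ := fun ℓ => if ℓ = i ∨ ℓ = j then (x i + x j) / 2 else x ℓ with hydef
  have hyval : ∀ v, v ≠ i → v ≠ j → y v = x v := fun v h1 h2 => by
    simp [hydef, h1, h2]
  have hyi : y i = (x i + x j) / 2 := by simp [hydef]
  have hyj : y j = (x i + x j) / 2 := by simp [hydef]
  have hji : j ≠ i := hij.symm
  set B := G.edges.filter (fun e => i ∈ e ∧ j ∈ e) with hBdef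
  set Q : Finset ℕ → ℝ := fun e => ∏ v ∈ (e.erase i).erase j, x v with hQdef
  have hQnn : ∀ e ∈ B, 0 ≤ Q e := by
    intro e he
    exact Finset.prod_nonneg fun v hv => hx0 v (G.edges_sub e (Finset.mem_filter.mp he).1
      (Finset.mem_of_mem_erase (Finset.mem_of_mem_erase hv)))
  -- the key identity
  have split : ∀ (f : Finset ℕ → ℝ), ∑ e ∈ G.edges, f e =
      ∑ e ∈ B, f e + ∑ e ∈ G.edges.filter (fun e => i ∈ e ∧ j ∉ e), f e
      + ∑ e ∈ G.edges.filter (fun e => i ∉ e ∧ j ∈ e), f e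
      + ∑ e ∈ G.edges.filter (fun e => i ∉ e ∧ j ∉ e), f e := by
    intro f
    rw [hBdef, ← Finset.sum_filter_add_sum_filter_not G.edges (fun e => i ∈ e) f,
      ← Finset.sum_filter_add_sum_filter_not (G.edges.filter (fun e => i ∈ e))
        (fun e => j ∈ e) f,
      ← Finset.sum_filter_add_sum_filter_not (G.edges.filter (fun e => ¬ i ∈ e))
        (fun e => j ∈ e) f]
    simp only [Finset.filter_filter]
    ring
  have eB : ∑ e ∈ B, ∏ v ∈ e, y v
      = ∑ e ∈ B, ∏ v ∈ e, x v + (x i - x j) ^ 2 / 4 * ∑ e ∈ B, Q e := by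
    rw [Finset.mul_sum, ← Finset.sum_add_distrib]
    refine Finset.sum_congr rfl fun e he => ?_
    obtain ⟨heE, hie, hje⟩ := Finset.mem_filter.mp he
    have hje' : j ∈ e.erase i := Finset.mem_erase.mpr ⟨hji, hje⟩
    rw [← Finset.mul_prod_erase e y hie, ← Finset.mul_prod_erase _ y hje',
      ← Finset.mul_prod_erase e x hie, ← Finset.mul_prod_erase _ x hje']
    have hq : ∏ v ∈ (e.erase i).erase j, y v = Q e := by
      refine Finset.prod_congr rfl fun v hv => ?_
      exact hyval v (Finset.ne_of_mem_erase (Finset.mem_of_mem_erase hv))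
        (Finset.ne_of_mem_erase hv)
    rw [hq, hyi, hyj, hQdef]
    ring
  have eI : ∑ e ∈ G.edges.filter (fun e => i ∈ e ∧ j ∉ e), ∏ v ∈ e, y v
      = ∑ e ∈ G.edges.filter (fun e => i ∈ e ∧ j ∉ e), ∏ v ∈ e, x v
        + (x j - x i) / 2 * ∑ e ∈ G.edges.filter (fun e => i ∈ e ∧ j ∉ e),
            ∏ v ∈ e.erase i, x v := by
    rw [Finset.mul_sum, ← Finset.sum_add_distrib]
    refine Finset.sum_congr rfl fun e he => ?_
    obtain ⟨heE, hie, hje⟩ := Finset.mem_filter.mp he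
    rw [← Finset.mul_prod_erase e y hie, ← Finset.mul_prod_erase e x hie]
    have hq : ∏ v ∈ e.erase i, y v = ∏ v ∈ e.erase i, x v := by
      refine Finset.prod_congr rfl fun v hv => ?_
      exact hyval v (Finset.ne_of_mem_erase hv)
        (fun h => hje (h ▸ Finset.mem_of_mem_erase hv))
    rw [hq, hyi]; ring
  have eJ : ∑ e ∈ G.edges.filter (fun e => i ∉ e ∧ j ∈ e), ∏ v ∈ e, y v
      = ∑ e ∈ G.edges.filter (fun e => i ∉ e ∧ j ∈ e), ∏ v ∈ e, x v
        + (x i - x j) / 2 * ∑ e ∈ G.edges.filter (fun e => i ∉ e ∧ j ∈ e),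
            ∏ v ∈ e.erase j, x v := by
    rw [Finset.mul_sum, ← Finset.sum_add_distrib]
    refine Finset.sum_congr rfl fun e he => ?_
    obtain ⟨heE, hie, hje⟩ := Finset.mem_filter.mp he
    rw [← Finset.mul_prod_erase e y hje, ← Finset.mul_prod_erase e x hje]
    have hq : ∏ v ∈ e.erase j, y v = ∏ v ∈ e.erase j, x v := by
      refine Finset.prod_congr rfl fun v hv => ?_
      exact hyval v (fun h => hie (h ▸ Finset.mem_of_mem_erase hv))
        (Finset.ne_of_mem_erase hv)
    rw [hq, hyj]; ring
  have eN : ∑ e ∈ G.edges.filter (fun e => i ∉ e ∧ j ∉ e), ∏ v ∈ e, y v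
      = ∑ e ∈ G.edges.filter (fun e => i ∉ e ∧ j ∉ e), ∏ v ∈ e, x v := by
    refine Finset.sum_congr rfl fun e he => ?_
    obtain ⟨heE, hie, hje⟩ := Finset.mem_filter.mp he
    refine Finset.prod_congr rfl fun v hv => ?_
    exact hyval v (fun h => hie (h ▸ hv)) (fun h => hje (h ▸ hv))
  have hS : ∑ e ∈ G.edges.filter (fun e => i ∈ e ∧ j ∉ e), ∏ v ∈ e.erase i, x v
      = ∑ e ∈ G.edges.filter (fun e => i ∉ e ∧ j ∈ e), ∏ v ∈ e.erase j, x v := by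
    refine Finset.sum_bij' (fun e _ => insert j (e.erase i))
      (fun e _ => insert i (e.erase j)) ?_ ?_ ?_ ?_ ?_
    · intro a ha
      obtain ⟨haE, hia, hja⟩ := Finset.mem_filter.mp ha
      have hji' : j ∉ a.erase i := fun h => hja (Finset.mem_of_mem_erase h)
      have hcard : (a.erase i).card = r - 1 := by
        rw [Finset.card_erase_of_mem hia, G.card_eq a haE]
      have hins : insert i (a.erase i) ∈ G.edges := by
        rwa [Finset.insert_erase hia]
      have hedge : insert j (a.erase i) ∈ G.edges := by
        by_contra hne
        have : a.erase i ∈ linkDiff G i j := ⟨hcard, hji', hins, hne⟩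
        rw [hL1] at this; exact this
      refine Finset.mem_filter.mpr ⟨hedge, ?_, Finset.mem_insert_self _ _⟩
      intro h
      rcases Finset.mem_insert.mp h with h | h
      · exact hij h
      · exact Finset.notMem_erase i a h
    · intro a ha
      obtain ⟨haE, hia, hja⟩ := Finset.mem_filter.mp ha
      have hij' : i ∉ a.erase j := fun h => hia (Finset.mem_of_mem_erase h)
      have hcard : (a.erase j).card = r - 1 := by
        rw [Finset.card_erase_of_mem hja, G.card_eq a haE]
      have hins : insert j (a.erase j) ∈ G.edges := by
        rwa [Finset.insert_erase hja]
      have hedge : insert i (a.erase j) ∈ G.edges := by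
        by_contra hne
        have : a.erase j ∈ linkDiff G j i := ⟨hcard, hij', hins, hne⟩
        rw [hL2] at this; exact this
      refine Finset.mem_filter.mpr ⟨hedge, Finset.mem_insert_self _ _, ?_⟩
      intro h
      rcases Finset.mem_insert.mp h with h | h
      · exact hji h
      · exact Finset.notMem_erase j a h
    · intro a ha
      obtain ⟨haE, hia, hja⟩ := Finset.mem_filter.mp ha
      have hji' : j ∉ a.erase i := fun h => hja (Finset.mem_of_mem_erase h)
      simp only [Finset.erase_insert hji', Finset.insert_erase hia]
    · intro a ha
      obtain ⟨haE, hia, hja⟩ := Finset.mem_filter.mp ha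
      have hij' : i ∉ a.erase j := fun h => hia (Finset.mem_of_mem_erase h)
      simp only [Finset.erase_insert hij', Finset.insert_erase hja]
    · intro a ha
      obtain ⟨haE, hia, hja⟩ := Finset.mem_filter.mp ha
      have hji' : j ∉ a.erase i := fun h => hja (Finset.mem_of_mem_erase h)
      simp only [Finset.erase_insert hji']
  have key : G.lagFun y = G.lagFun x + (x i - x j) ^ 2 / 4 * ∑ e ∈ B, Q e := by
    unfold HyperGraph.lagFun
    rw [split (fun e => ∏ v ∈ e, y v), split (fun e => ∏ v ∈ e, x v), eB, eI, eJ, eN, hS]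
    ring
  have hQsum : 0 ≤ ∑ e ∈ B, Q e := Finset.sum_nonneg hQnn
  constructor
  · rw [key]
    nlinarith [sq_nonneg (x i - x j)]
  · rintro ⟨e0, he0, hie0, hje0⟩ hpos heq
    have he0B : e0 ∈ B := Finset.mem_filter.mpr ⟨he0, hie0, hje0⟩
    have hQ0 : 0 < Q e0 := by
      refine Finset.prod_pos fun v hv => ?_
      refine hpos v ?_
      rw [← hG]
      exact G.edges_sub e0 he0 (Finset.mem_of_mem_erase (Finset.mem_of_mem_erase hv))
    have hQsum' : 0 < ∑ e ∈ B, Q e :=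
      lt_of_lt_of_le hQ0 (Finset.single_le_sum hQnn he0B)
    rw [key] at heq
    have h0 : (x i - x j) ^ 2 / 4 * ∑ e ∈ B, Q e = 0 := by linarith
    have : (x i - x j) ^ 2 = 0 := by
      rcases mul_eq_zero.mp h0 with h | h
      · linarith
      · linarith
    have := pow_eq_zero_iff (n := 2) (by norm_num) |>.mp this
    linarith
end

section
/- Let G be an r-uniform graph on vertex set [n], let i,j ∈ [n] with i ≠ j, and suppose L_G(j\i) = ∅. If G has an optimum weight vector, then G has an optimum weight vector y with y_i ≥ y_j. -/
open Finset

lemma lag_bddAbove {r : ℕ} (G : HyperGraph r) :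
    BddAbove {x : ℝ | ∃ w, G.IsFeasible w ∧ G.lagFun w = x} := by
  refine ⟨(G.edges.card : ℝ), ?_⟩
  rintro _ ⟨w, ⟨hw0, hw1⟩, rfl⟩
  calc G.lagFun w ≤ ∑ _e ∈ G.edges, (1 : ℝ) := by
        refine Finset.sum_le_sum fun e he => ?_
        refine Finset.prod_le_one (fun v hv => hw0 v (G.edges_sub e he hv)) (fun v hv => ?_)
        rw [← hw1]
        exact Finset.single_le_sum (fun u hu => hw0 u hu) (G.edges_sub e he hv)
    _ = (G.edges.card : ℝ) := by simp

/-- If `L_G(j \ i) = ∅` and `G` has an optimum weight vector, then `G` has an optimum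
weight vector `y` with `y i ≥ y j`. -/
theorem exists_optimal_with_ordered_weights (r n : ℕ) (G : HyperGraph r)
    (hG : G.verts = Finset.Icc 1 n) (i j : ℕ) (hi : i ∈ Finset.Icc 1 n)
    (hj : j ∈ Finset.Icc 1 n) (hij : i ≠ j) (hL : linkDiff G j i = ∅)
    (hopt : ∃ x, G.IsOptimal x) :
    ∃ y, G.IsOptimal y ∧ y j ≤ y i := by
  obtain ⟨x, ⟨hx0, hx1⟩, hxl⟩ := hopt
  by_cases hc : x j ≤ x i
  · exact ⟨x, ⟨⟨hx0, hx1⟩, hxl⟩, hc⟩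
  push_neg at hc
  set σ := Equiv.swap i j with hσ
  set y : ℕ → ℝ := fun v => x (σ v) with hy
  have hiv : i ∈ G.verts := by rw [hG]; exact hi
  have hjv : j ∈ G.verts := by rw [hG]; exact hj
  have hσv : ∀ v, σ v = if v = i then j else if v = j then i else v := by
    intro v
    rcases eq_or_ne v i with rfl | h1
    · simp [hσ]
    rcases eq_or_ne v j with rfl | h2
    · simp [hσ, hij.symm]
    · simp [hσ, Equiv.swap_apply_of_ne_of_ne h1 h2, h1, h2]
  have hσmem : ∀ v ∈ G.verts, σ v ∈ G.verts := by
    intro v hv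
    rw [hσv v]
    split_ifs <;> assumption
  have hmemiff : ∀ v, v ∈ G.verts ↔ σ v ∈ G.verts := by
    intro v
    refine ⟨hσmem v, fun h => ?_⟩
    have := hσmem _ h
    simpa [hσ] using this
  have hyfeas : G.IsFeasible y := by
    constructor
    · intro v hv; exact hx0 _ (hσmem v hv)
    · rw [← hx1]
      exact Finset.sum_equiv σ hmemiff (fun v _ => rfl)
  -- pointwise products
  have hxnn : ∀ e ∈ G.edges, ∀ v ∈ e, 0 ≤ x v :=
    fun e he v hv => hx0 v (G.edges_sub e he hv)
  have hA : ∀ e ∈ G.edges, i ∈ e → j ∉ e →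
      (∏ v ∈ e, y v = x j * ∏ v ∈ e.erase i, x v) ∧
      (∏ v ∈ e, x v = x i * ∏ v ∈ e.erase i, x v) := by
    intro e he hie hje
    constructor
    · rw [← Finset.mul_prod_erase e y hie]
      have h1 : y i = x j := by simp [hy, hσ]
      have h2 : ∏ v ∈ e.erase i, y v = ∏ v ∈ e.erase i, x v := by
        refine Finset.prod_congr rfl fun v hv => ?_
        have hvi : v ≠ i := (Finset.mem_erase.mp hv).1
        have hvj : v ≠ j := fun h => hje (h ▸ (Finset.mem_erase.mp hv).2)
        simp [hy, hσv v, hvi, hvj]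
      rw [h1, h2]
    · exact (Finset.mul_prod_erase e x hie).symm
  have hB : ∀ e ∈ G.edges, j ∈ e → i ∉ e →
      (∏ v ∈ e, y v = x i * ∏ v ∈ e.erase j, x v) ∧
      (∏ v ∈ e, x v = x j * ∏ v ∈ e.erase j, x v) := by
    intro e he hje hie
    constructor
    · rw [← Finset.mul_prod_erase e y hje]
      have h1 : y j = x i := by simp [hy, hσ]
      have h2 : ∏ v ∈ e.erase j, y v = ∏ v ∈ e.erase j, x v := by
        refine Finset.prod_congr rfl fun v hv => ?_
        have hvj : v ≠ j := (Finset.mem_erase.mp hv).1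
        have hvi : v ≠ i := fun h => hie (h ▸ (Finset.mem_erase.mp hv).2)
        simp [hy, hσv v, hvi, hvj]
      rw [h1, h2]
    · exact (Finset.mul_prod_erase e x hje).symm
  have hsame : ∀ e ∈ G.edges, ((i ∈ e ∧ j ∈ e) ∨ (i ∉ e ∧ j ∉ e)) →
      ∏ v ∈ e, y v = ∏ v ∈ e, x v := by
    intro e _ hcase
    refine Finset.prod_equiv σ (fun v => ?_) (fun v _ => rfl)
    rcases hcase with ⟨h1, h2⟩ | ⟨h1, h2⟩ <;>
    · rw [hσv v]
      split_ifs with hvi hvj <;> subst_vars <;> simp_all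
  -- the key inequality
  have key : G.lagFun x ≤ G.lagFun y := by
    have hsplit : G.lagFun y - G.lagFun x =
        ∑ e ∈ G.edges, (∏ v ∈ e, y v - ∏ v ∈ e, x v) := by
      rw [HyperGraph.lagFun, HyperGraph.lagFun, ← Finset.sum_sub_distrib]
    set D : Finset ℕ → ℝ := fun e => ∏ v ∈ e, y v - ∏ v ∈ e, x v with hD
    have hfilter : ∑ e ∈ G.edges.filter
        (fun e => (i ∈ e ∧ j ∉ e) ∨ (j ∈ e ∧ i ∉ e)), D e = ∑ e ∈ G.edges, D e := by
      refine Finset.sum_filter_of_ne fun e he hne => ?_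
      by_contra h
      push_neg at h
      apply hne
      have : ((i ∈ e ∧ j ∈ e) ∨ (i ∉ e ∧ j ∉ e)) := by tauto
      simp [hD, hsame e he this] at *
    have hdisj : Disjoint (G.edges.filter (fun e => i ∈ e ∧ j ∉ e))
        (G.edges.filter (fun e => j ∈ e ∧ i ∉ e)) := by
      refine Finset.disjoint_filter_filter' _ _ ?_
      intro p hp hq e he
      exact absurd (hp e he).1 ((hq e he).2)
    set Ei := G.edges.filter (fun e => i ∈ e ∧ j ∉ e) with hEi
    set Ej := G.edges.filter (fun e => j ∈ e ∧ i ∉ e) with hEj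
    have hunion : G.edges.filter (fun e => (i ∈ e ∧ j ∉ e) ∨ (j ∈ e ∧ i ∉ e)) =
        Ei ∪ Ej := Finset.filter_or _ _ _
    set A : Finset ℕ → ℝ := fun e => ∏ v ∈ e.erase i, x v with hAd
    set B : Finset ℕ → ℝ := fun e => ∏ v ∈ e.erase j, x v with hBd
    have hDi : ∀ e ∈ Ei, D e = (x j - x i) * A e := by
      intro e he
      rw [hEi, Finset.mem_filter] at he
      obtain ⟨he, hie, hje⟩ := he
      obtain ⟨h1, h2⟩ := hA e he hie hje
      simp [hD, hAd, h1, h2]; ring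
    have hDj : ∀ e ∈ Ej, D e = -((x j - x i) * B e) := by
      intro e he
      rw [hEj, Finset.mem_filter] at he
      obtain ⟨he, hje, hie⟩ := he
      obtain ⟨h1, h2⟩ := hB e he hje hie
      simp [hD, hBd, h1, h2]; ring
    -- injection from Ej to Ei
    set θ : Finset ℕ → Finset ℕ := fun e => insert i (e.erase j) with hθ
    have hθmem : ∀ e ∈ Ej, θ e ∈ Ei := by
      intro e he
      rw [hEj, Finset.mem_filter] at he
      obtain ⟨he, hje, hie⟩ := he
      have hif : i ∉ e.erase j := fun h => hie (Finset.mem_of_mem_erase h)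
      have hins : insert i (e.erase j) ∈ G.edges := by
        by_contra hno
        have : e.erase j ∈ linkDiff G j i := by
          refine ⟨?_, hif, ?_, hno⟩
          · rw [Finset.card_erase_of_mem hje, G.card_eq e he]
          · rw [Finset.insert_erase hje]; exact he
        rw [hL] at this
        exact this
      rw [hEi, Finset.mem_filter]
      refine ⟨hins, Finset.mem_insert_self _ _, ?_⟩
      intro h
      rcases Finset.mem_insert.mp h with h | h
      · exact hij h.symm
      · exact (Finset.mem_erase.mp h).1 rfl
    have hθinj : Set.InjOn θ Ej := by
      intro e1 h1 e2 h2 heq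
      have h1 := Finset.mem_filter.mp (Finset.mem_coe.mp h1)
      have h2 := Finset.mem_filter.mp (Finset.mem_coe.mp h2)
      have hif1 : i ∉ e1.erase j := fun h => h1.2.2 (Finset.mem_of_mem_erase h)
      have hif2 : i ∉ e2.erase j := fun h => h2.2.2 (Finset.mem_of_mem_erase h)
      have : e1.erase j = e2.erase j := by
        have := congrArg (fun s => Finset.erase s i) heq
        simpa [hθ, Finset.erase_insert hif1, Finset.erase_insert hif2] using this
      calc e1 = insert j (e1.erase j) := (Finset.insert_erase h1.2.1).symm
        _ = insert j (e2.erase j) := by rw [this]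
        _ = e2 := Finset.insert_erase h2.2.1
    have hBA : ∀ e ∈ Ej, B e = A (θ e) := by
      intro e he
      rw [hEj, Finset.mem_filter] at he
      have hif : i ∉ e.erase j := fun h => he.2.2 (Finset.mem_of_mem_erase h)
      simp [hAd, hBd, hθ, Finset.erase_insert hif]
    have hAnn : ∀ e ∈ Ei, 0 ≤ A e := by
      intro e he
      rw [hEi, Finset.mem_filter] at he
      exact Finset.prod_nonneg fun v hv => hxnn e he.1 v (Finset.mem_of_mem_erase hv)
    have hsumBA : ∑ e ∈ Ej, B e ≤ ∑ e ∈ Ei, A e := by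
      calc ∑ e ∈ Ej, B e = ∑ e ∈ Ej, A (θ e) := Finset.sum_congr rfl hBA
        _ = ∑ f ∈ Ej.image θ, A f := (Finset.sum_image fun a ha b hb h =>
              hθinj (by simpa using ha) (by simpa using hb) h).symm
        _ ≤ ∑ e ∈ Ei, A e := Finset.sum_le_sum_of_subset_of_nonneg
              (fun f hf => by
                obtain ⟨e, he, rfl⟩ := Finset.mem_image.mp hf
                exact hθmem e he)
              (fun e he _ => hAnn e he)
    have hDsum : 0 ≤ ∑ e ∈ G.edges, D e := by
      rw [← hfilter, hunion, Finset.sum_union hdisj,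
        Finset.sum_congr rfl hDi, Finset.sum_congr rfl hDj]
      rw [← Finset.mul_sum, Finset.sum_neg_distrib, ← Finset.mul_sum]
      have : (0:ℝ) ≤ (x j - x i) * (∑ e ∈ Ei, A e - ∑ e ∈ Ej, B e) :=
        mul_nonneg (by linarith) (by linarith)
      linarith [this]
    linarith [hsplit ▸ hDsum]
  have hyle : G.lagFun y ≤ G.lag :=
    le_csSup (lag_bddAbove G) ⟨y, hyfeas, rfl⟩
  have hyeq : G.lagFun y = G.lag := le_antisymm hyle (hxl ▸ key)
  refine ⟨y, ⟨hyfeas, hyeq⟩, ?_⟩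
  have h1 : y j = x i := by simp [hy, hσ]
  have h2 : y i = x j := by simp [hy, hσ]
  rw [h1, h2]; exact le_of_lt hc
end

section
/- Let G be a dense, K_4^3 ∪ e-free 3-graph with λ(G) > √3/18. Then G is X_4-free, where X_4 is the 3-graph on vertex set {1,...,10} whose edges are the four triples inside each of the 4-sets {1,2,3,4}, {1,2,5,6}, {1,2,7,8}, {1,2,9,10} (four copies of K_4^3 all sharing the two vertices 1,2). -/
open Finset

/-- `X_4`: four copies of `K_4^3` all sharing the two vertices `1, 2`. -/
def X4 : ThreeGraph where
  verts := {1, 2, 3, 4, 5, 6, 7, 8, 9, 10}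
  edges := {{1, 2, 3}, {1, 2, 4}, {1, 3, 4}, {2, 3, 4},
    {1, 2, 5}, {1, 2, 6}, {1, 5, 6}, {2, 5, 6},
    {1, 2, 7}, {1, 2, 8}, {1, 7, 8}, {2, 7, 8},
    {1, 2, 9}, {1, 2, 10}, {1, 9, 10}, {2, 9, 10}}
  edges_sub := by decide
  card_eq := by decide

/-!
If `f` embeds `X_4` in `G`, an edge of `G` avoiding `f 1` and `f 2` has only three vertices
for the four disjoint pairs `f {3,4}, …, f {9,10}`, so it misses one of them and together
with that copy of `K_4^3` forms a `K_4^3 ∪ e`. Hence every edge of `G` meets `{u, v} =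
{f 1, f 2}`. For such a 3-graph, with weights `a, b` on `u, v` and total weight `T` on the
other vertices, the Lagrangian is at most `(a + b) T² / 2 + a b T ≤ s (1 - s) (2 - s) / 4`
where `s = a + b`, and this cubic peaks at `s = 1 - 1/√3` with value `√3/18`.
-/

namespace Finset

theorem exists_disjoint_of_card_lt {ι α : Type*} {s : Finset ι} {P : ι → Finset α}
    (hP : (s : Set ι).PairwiseDisjoint P) {t : Finset α} (hcard : #t < #s) :
    ∃ i ∈ s, Disjoint (P i) t := by
  by_contra! hmeet
  choose g hgP hgt using fun i : s => not_disjoint_iff.mp (hmeet i i.2)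
  have hg : Set.InjOn g (s.attach : Set s) := fun i _ j _ hij =>
    Subtype.ext (hP.elim_finset i.2 j.2 _ (hgP i) (hij ▸ hgP j))
  exact hcard.not_ge (card_attach (s := s) ▸ card_le_card_of_injOn g (fun i _ => hgt i) hg)

section PowersetCardProd

variable {α R : Type*} [DecidableEq α]

theorem sum_powersetCard_two_prod_insert [CommSemiring R] (w : α → R) {a : α} {s : Finset α}
    (ha : a ∉ s) :
    ∑ p ∈ (insert a s).powersetCard 2, ∏ x ∈ p, w x
      = ∑ p ∈ s.powersetCard 2, ∏ x ∈ p, w x + w a * ∑ x ∈ s, w x := by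
  rw [powersetCard_succ_insert ha, sum_union, sum_image, powersetCard_one, sum_map, mul_sum]
  · congr 1
    refine sum_congr rfl fun x hx => ?_
    rw [Function.Embedding.coeFn_mk,
      prod_insert (notMem_singleton.mpr (ne_of_mem_of_not_mem hx ha).symm), prod_singleton]
  · intro p hp q hq hpq
    have hap : a ∉ p := fun h => ha ((mem_powersetCard.1 hp).1 h)
    have haq : a ∉ q := fun h => ha ((mem_powersetCard.1 hq).1 h)
    rw [← erase_insert hap, ← erase_insert haq, hpq]
  · refine disjoint_left.2 fun p hp hp' => ?_
    obtain ⟨q, -, rfl⟩ := mem_image.1 hp'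
    exact ha ((mem_powersetCard.1 hp).1 (mem_insert_self a q))

theorem sum_powersetCard_two_prod_le [Field R] [LinearOrder R] [IsStrictOrderedRing R]
    (w : α → R) (s : Finset α) :
    ∑ p ∈ s.powersetCard 2, ∏ x ∈ p, w x ≤ (∑ x ∈ s, w x) ^ 2 / 2 := by
  induction s using Finset.induction with
  | empty => simp [powersetCard_eq_empty.2 (by simp : #(∅ : Finset α) < 2)]
  | insert a s ha ih =>
    rw [sum_powersetCard_two_prod_insert w ha, sum_insert ha]
    nlinarith [sq_nonneg (w a)]

theorem sum_prod_le_mul_sum_powersetCard_prod [CommSemiring R] [PartialOrder R]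
    [IsOrderedRing R] {w : α → R} {z : α} {r : ℕ} {s : Finset α} {F : Finset (Finset α)}
    (hwz : 0 ≤ w z) (hw : ∀ x ∈ s, 0 ≤ w x) (hF : ∀ e ∈ F, z ∈ e ∧ e.erase z ⊆ s ∧ #e = r + 1) :
    ∑ e ∈ F, ∏ x ∈ e, w x ≤ w z * ∑ p ∈ s.powersetCard r, ∏ x ∈ p, w x := by
  have hinj : Set.InjOn (fun e : Finset α => e.erase z) F := fun e he e' he' h => by
    rw [← insert_erase (hF e he).1, ← insert_erase (hF e' he').1]
    exact congrArg (insert z) h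
  calc ∑ e ∈ F, ∏ x ∈ e, w x = w z * ∑ p ∈ F.image (fun e => e.erase z), ∏ x ∈ p, w x := by
        rw [sum_image hinj, mul_sum]
        exact sum_congr rfl fun e he => (mul_prod_erase e w (hF e he).1).symm
    _ ≤ w z * ∑ p ∈ s.powersetCard r, ∏ x ∈ p, w x := by
        refine mul_le_mul_of_nonneg_left (sum_le_sum_of_subset_of_nonneg ?_ ?_) hwz
        · intro p hp
          obtain ⟨e, he, rfl⟩ := mem_image.1 hp
          refine mem_powersetCard.2 ⟨(hF e he).2.1, ?_⟩
          rw [card_erase_of_mem (hF e he).1, (hF e he).2.2, Nat.add_sub_cancel]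
        · exact fun p hp _ => prod_nonneg fun x hx => hw x ((mem_powersetCard.1 hp).1 hx)

end PowersetCardProd

end Finset

theorem Set.PairwiseDisjoint.finset_image_of_injOn {ι α β : Type*} [DecidableEq α]
    [DecidableEq β] {s : Set ι} {P : ι → Finset α} (hP : s.PairwiseDisjoint P) {f : α → β}
    {U : Set α} (hf : Set.InjOn f U) (hPU : ∀ i ∈ s, ↑(P i) ⊆ U) :
    s.PairwiseDisjoint fun i => (P i).image f := by
  intro i hi j hj hij
  rw [Function.onFun, Finset.disjoint_iff_inter_eq_empty, ← image_inter_of_injOn _ _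
    (hf.mono (coe_union (P i) (P j) ▸ Set.union_subset (hPU i hi) (hPU j hj))),
    Finset.disjoint_iff_inter_eq_empty.1 (hP hi hj hij), Finset.image_empty]

theorem cubic_le_sqrt_three_div_eighteen {s : ℝ} (hs0 : 0 ≤ s) (hs1 : s ≤ 1) :
    s * (1 - s) * (2 - s) / 4 ≤ √3 / 18 := by
  have h3 : √3 ^ 2 = 3 := Real.sq_sqrt (by norm_num)
  have h3' : 1.7 ≤ √3 := by nlinarith [Real.sqrt_nonneg 3]
  nlinarith [mul_nonneg (sq_nonneg (s - 1 + √3 / 3)) (by nlinarith : 0 ≤ 1 + 2 * (√3 / 3) - s)]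

theorem add_mul_sq_add_mul_mul_le {a b T : ℝ} (ha : 0 ≤ a) (hb : 0 ≤ b) (hT : 0 ≤ T)
    (hsum : a + b + T = 1) : (a + b) * (T ^ 2 / 2) + a * b * T ≤ √3 / 18 := by
  have hab : a * b * T ≤ (a + b) ^ 2 / 4 * T := by nlinarith [mul_nonneg (sq_nonneg (a - b)) hT]
  have hcubic := cubic_le_sqrt_three_div_eighteen (add_nonneg ha hb) (by linarith)
  rw [show T = 1 - (a + b) by linarith] at hab ⊢
  nlinarith

theorem X4_K4_verts : ∀ k ∈ ({3, 5, 7, 9} : Finset ℕ),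
    {1, 2, k, k + 1} ⊆ X4.verts ∧ #({1, 2, k, k + 1} : Finset ℕ) = 4 := by
  decide

theorem X4_K4_edges : ∀ k ∈ ({3, 5, 7, 9} : Finset ℕ), {1, 2, k} ∈ X4.edges ∧
    {1, 2, k + 1} ∈ X4.edges ∧ {1, k, k + 1} ∈ X4.edges ∧ {2, k, k + 1} ∈ X4.edges := by
  decide

theorem pairwiseDisjoint_X4_pairs :
    (({3, 5, 7, 9} : Finset ℕ) : Set ℕ).PairwiseDisjoint fun k => ({k, k + 1} : Finset ℕ) := by
  intro i hi j hj hij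
  simp only [coe_insert, coe_singleton, Set.mem_insert_iff, Set.mem_singleton_iff] at hi hj
  rcases hi with rfl | rfl | rfl | rfl <;> rcases hj with rfl | rfl | rfl | rfl <;>
    first | exact absurd rfl hij | decide

namespace HyperGraph

theorem lagFun_le_of_forall_mem_or_mem (G : ThreeGraph) {u v : ℕ} (huv : u ≠ v)
    (hu : u ∈ G.verts) (hv : v ∈ G.verts) (hcover : ∀ e ∈ G.edges, u ∈ e ∨ v ∈ e)
    {w : ℕ → ℝ} (hw : G.IsFeasible w) : G.lagFun w ≤ √3 / 18 := by
  obtain ⟨hw0, hw1⟩ := hw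
  set V' := (G.verts.erase u).erase v
  set T := ∑ x ∈ V', w x
  set P := ∑ p ∈ V'.powersetCard 2, ∏ x ∈ p, w x
  have hvu : v ∈ G.verts.erase u := mem_erase.2 ⟨huv.symm, hv⟩
  have hV' : V' ⊆ G.verts := (erase_subset _ _).trans (erase_subset _ _)
  have hT : 0 ≤ T := sum_nonneg fun x hx => hw0 x (hV' hx)
  have hsum : w u + w v + T = 1 := by
    rw [← hw1, ← add_sum_erase _ w hu, ← add_sum_erase _ w hvu, add_assoc]
  have hu_edges : ∑ e ∈ G.edges with u ∈ e, ∏ x ∈ e, w x ≤ w u * (P + w v * T) := by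
    rw [← sum_powersetCard_two_prod_insert w (notMem_erase v _), insert_erase hvu]
    refine sum_prod_le_mul_sum_powersetCard_prod (hw0 u hu)
      (fun x hx => hw0 x (mem_of_mem_erase hx)) fun e he => ?_
    obtain ⟨he, hue⟩ := mem_filter.1 he
    exact ⟨hue, erase_subset_erase u (G.edges_sub e he), G.card_eq e he⟩
  have hv_edges : ∑ e ∈ G.edges with u ∉ e, ∏ x ∈ e, w x ≤ w v * P := by
    refine sum_prod_le_mul_sum_powersetCard_prod (hw0 v hv) (fun x hx => hw0 x (hV' hx))
      fun e he => ?_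
    obtain ⟨he, hue⟩ := mem_filter.1 he
    exact ⟨(hcover e he).resolve_left hue,
      erase_subset_erase v (subset_erase.2 ⟨G.edges_sub e he, hue⟩), G.card_eq e he⟩
  have hP : (w u + w v) * P ≤ (w u + w v) * (T ^ 2 / 2) :=
    mul_le_mul_of_nonneg_left (sum_powersetCard_two_prod_le w V')
      (add_nonneg (hw0 u hu) (hw0 v hv))
  have hpoly := add_mul_sq_add_mul_mul_le (hw0 u hu) (hw0 v hv) hT hsum
  rw [lagFun, ← sum_filter_add_sum_filter_not G.edges (u ∈ ·)]
  linarith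

theorem lag_le_of_forall_mem_or_mem (G : ThreeGraph) {u v : ℕ} (huv : u ≠ v)
    (hu : u ∈ G.verts) (hv : v ∈ G.verts) (hcover : ∀ e ∈ G.edges, u ∈ e ∨ v ∈ e) :
    G.lag ≤ √3 / 18 :=
  Real.sSup_le (fun _ ⟨_, hw, hx⟩ => hx ▸ G.lagFun_le_of_forall_mem_or_mem huv hu hv hcover hw)
    (by positivity)

theorem containsCopy_K43e {G : ThreeGraph} {a b c d : ℕ} (hK : #({a, b, c, d} : Finset ℕ) = 4)
    (habc : {a, b, c} ∈ G.edges) (habd : {a, b, d} ∈ G.edges) (hacd : {a, c, d} ∈ G.edges)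
    (hbcd : {b, c, d} ∈ G.edges) {e : Finset ℕ} (he : e ∈ G.edges)
    (hdisj : Disjoint {a, b, c, d} e) : G.ContainsCopy K43e := by
  obtain ⟨x, y, z, -, -, -, rfl⟩ := card_eq_three.1 (G.card_eq e he)
  let g : ℕ → ℕ := fun n => if n = 1 then a else if n = 2 then b else if n = 3 then c else
    if n = 4 then d else if n = 5 then x else if n = 6 then y else z
  have himage : K43e.verts.image g = {a, b, c, d} ∪ {x, y, z} := by
    rw [insert_union, insert_union, insert_union, ← insert_eq]
    simp [K43e, g]
  have hK_verts : {a, b, c, d} ⊆ G.verts := by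
    simp only [insert_subset_iff, singleton_subset_iff]
    exact ⟨G.edges_sub _ habc (by simp), G.edges_sub _ habc (by simp),
      G.edges_sub _ habc (by simp), G.edges_sub _ habd (by simp)⟩
  refine ⟨g, card_image_iff.1 ?_, fun v hv => ?_, fun ed hed => ?_⟩
  · rw [himage, card_union_of_disjoint hdisj, hK, G.card_eq _ he]
    rfl
  · have hgv := mem_image_of_mem g hv
    rw [himage] at hgv
    exact union_subset hK_verts (G.edges_sub _ he) hgv
  · simp only [K43e, mem_insert, mem_singleton] at hed
    rcases hed with rfl | rfl | rfl | rfl | rfl <;> simpa [g]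

theorem forall_mem_or_mem_of_copy_X4 {G : ThreeGraph} (hfree : G.Free K43e) {f : ℕ → ℕ}
    (hinj : Set.InjOn f X4.verts) (hf : ∀ ed ∈ X4.edges, ed.image f ∈ G.edges) :
    ∀ e ∈ G.edges, f 1 ∈ e ∨ f 2 ∈ e := by
  intro e he
  by_contra! h12
  have hpairs := pairwiseDisjoint_X4_pairs.finset_image_of_injOn hinj fun k hk =>
    coe_subset.2 ((subset_insert _ _).trans ((subset_insert _ _).trans (X4_K4_verts k hk).1))
  obtain ⟨k, hk, hdisj⟩ := exists_disjoint_of_card_lt hpairs (by rw [G.card_eq e he]; decide)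
  obtain ⟨hK_sub, hK_card⟩ := X4_K4_verts k hk
  obtain ⟨h12k, h12k', h1kk', h2kk'⟩ := X4_K4_edges k hk
  have hK : #({f 1, f 2, f k, f (k + 1)} : Finset ℕ) = 4 := by
    rw [← hK_card, ← card_image_of_injOn (hinj.mono (coe_subset.2 hK_sub))]
    simp only [image_insert, image_singleton]
  refine hfree (containsCopy_K43e hK (by simpa using hf _ h12k) (by simpa using hf _ h12k')
    (by simpa using hf _ h1kk') (by simpa using hf _ h2kk') he ?_)
  simpa [disjoint_insert_left, h12] using hdisj

end HyperGraph

theorem dense_K43e_free_X4_free_general (G : ThreeGraph)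
    (hfree : G.Free K43e) (hlag : Real.sqrt 3 / 18 < G.lag) : G.Free X4 := by
  rintro ⟨f, hinj, hverts, hedges⟩
  have h12 : f 1 ≠ f 2 := hinj.ne (by decide) (by decide) (by decide)
  have hcover := HyperGraph.forall_mem_or_mem_of_copy_X4 hfree hinj hedges
  exact hlag.not_ge (G.lag_le_of_forall_mem_or_mem h12 (hverts 1 (by decide))
    (hverts 2 (by decide)) hcover)

/-- A dense `K_4^3 ∪ e`-free 3-graph with Lagrangian greater than `√3/18` is `X_4`-free. -/
theorem dense_K43e_free_X4_free (G : ThreeGraph) (hdense : G.LagDense)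
    (hfree : G.Free K43e) (hlag : Real.sqrt 3 / 18 < G.lag) : G.Free X4 :=
  dense_K43e_free_X4_free_general G hfree hlag
end

section
/- Every K_5^{3−}-free 3-graph G on 6 vertices has at most 16 edges, and its Lagrangian satisfies λ(G) ≤ 2/25 (the Lagrangian of the complete 3-graph K_5^3). -/
open Finset

/-- `K_5^{3−}`: the complete 3-graph on `{1, 2, 3, 4, 5}` with the edge `{3, 4, 5}`
removed. -/
def K53minus : ThreeGraph where
  verts := {1, 2, 3, 4, 5}
  edges := (Finset.powersetCard 3 ({1, 2, 3, 4, 5} : Finset ℕ)).erase {3, 4, 5}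
  edges_sub := by decide
  card_eq := by decide


set_option maxHeartbeats 1000000 in
set_option maxRecDepth 10000 in
theorem key_ineq (x1 x2 x3 x4 x5 x6 : ℝ)
    (h12 : x2 ≤ x1) (h23 : x3 ≤ x2) (h34 : x4 ≤ x3) (h45 : x5 ≤ x4) (h56 : x6 ≤ x5)
    (h6 : 0 ≤ x6) (hsum : x1 + x2 + x3 + x4 + x5 + x6 = 1) :
    x1*x2*x3 + x1*x2*x4 + x1*x2*x5 + x1*x2*x6 + x1*x3*x4 + x1*x3*x5 + x1*x3*x6
    + x1*x4*x5 + x1*x4*x6 + x1*x5*x6 + x2*x3*x4 + x2*x3*x5 + x2*x3*x6 + x2*x4*x5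
    + x2*x4*x6 + x2*x5*x6 + x3*x4*x5 + x3*x4*x6 + x3*x5*x6 + x4*x5*x6
    ≤ 2/25 + (3*x4*x5*x6 + 3*x3*x5*x6 + 2*x2*x5*x6 + x3*x4*x6 + x2*x4*x6
      + x3*x4*x5 + x2*x4*x5)/3 := by
  have hc : (x1+x2+x3+x4+x5+x6)^3 = 1 := by rw [hsum]; norm_num
  have d1 : (0:ℝ) ≤ x1 - x2 := by linarith
  have d2 : (0:ℝ) ≤ x2 - x3 := by linarith
  have d3 : (0:ℝ) ≤ x3 - x4 := by linarith
  have d4 : (0:ℝ) ≤ x4 - x5 := by linarith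
  have d5 : (0:ℝ) ≤ x5 - x6 := by linarith
  linarith [hc,
    (mul_nonneg (mul_nonneg d5 d5) h6),
    (mul_nonneg (mul_nonneg d5 d5) d5),
    (mul_nonneg (mul_nonneg d4 d5) h6),
    (mul_nonneg (mul_nonneg d4 d5) d5),
    (mul_nonneg (mul_nonneg d4 d4) d5),
    (mul_nonneg (mul_nonneg d4 d4) d4),
    (mul_nonneg (mul_nonneg d3 d5) d5),
    (mul_nonneg (mul_nonneg d3 d4) d5),
    (mul_nonneg (mul_nonneg d3 d4) d4),
    (mul_nonneg (mul_nonneg d3 d3) h6),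
    (mul_nonneg (mul_nonneg d3 d3) d5),
    (mul_nonneg (mul_nonneg d3 d3) d4),
    (mul_nonneg (mul_nonneg d3 d3) d3),
    (mul_nonneg (mul_nonneg d2 d4) d5),
    (mul_nonneg (mul_nonneg d2 d4) d4),
    (mul_nonneg (mul_nonneg d2 d3) h6),
    (mul_nonneg (mul_nonneg d2 d3) d5),
    (mul_nonneg (mul_nonneg d2 d3) d4),
    (mul_nonneg (mul_nonneg d2 d3) d3),
    (mul_nonneg (mul_nonneg d2 d2) h6),
    (mul_nonneg (mul_nonneg d2 d2) d5),
    (mul_nonneg (mul_nonneg d2 d2) d4),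
    (mul_nonneg (mul_nonneg d2 d2) d3),
    (mul_nonneg (mul_nonneg d2 d2) d2),
    (mul_nonneg (mul_nonneg d1 d4) d5),
    (mul_nonneg (mul_nonneg d1 d4) d4),
    (mul_nonneg (mul_nonneg d1 d3) h6),
    (mul_nonneg (mul_nonneg d1 d3) d5),
    (mul_nonneg (mul_nonneg d1 d3) d4),
    (mul_nonneg (mul_nonneg d1 d3) d3),
    (mul_nonneg (mul_nonneg d1 d2) h6),
    (mul_nonneg (mul_nonneg d1 d2) d5),
    (mul_nonneg (mul_nonneg d1 d2) d4),
    (mul_nonneg (mul_nonneg d1 d2) d3),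
    (mul_nonneg (mul_nonneg d1 d2) d2),
    (mul_nonneg (mul_nonneg d1 d1) h6),
    (mul_nonneg (mul_nonneg d1 d1) d5),
    (mul_nonneg (mul_nonneg d1 d1) d4),
    (mul_nonneg (mul_nonneg d1 d1) d3),
    (mul_nonneg (mul_nonneg d1 d1) d2),
    (mul_nonneg (mul_nonneg d1 d1) d1),
    mul_nonneg d2 (sq_nonneg ((x1-x2) - (x5-x6))),
    mul_nonneg d5 (sq_nonneg ((x1-x2) - x6)),
    mul_nonneg d5 (sq_nonneg ((x2-x3) - x6)),
    mul_nonneg d5 (sq_nonneg ((x3-x4) - x6)),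
    mul_nonneg d5 (sq_nonneg (x6 - (x1-x2) - (x2-x3))),
    mul_nonneg h6 (sq_nonneg ((x1-x2) - (x4-x5))),
    mul_nonneg h6 (sq_nonneg ((x2-x3) - (x4-x5))),
    mul_nonneg h6 (sq_nonneg ((x2-x3) - x6)),
    mul_nonneg h6 (sq_nonneg ((x3-x4) - (x4-x5))),
    mul_nonneg h6 (sq_nonneg ((x3-x4) - x6)),
    mul_nonneg h6 (sq_nonneg ((x4-x5) - x6)),
    mul_nonneg h6 (sq_nonneg ((x4-x5) - (x1-x2) - (x2-x3))),
    mul_nonneg h6 (sq_nonneg (x6 - (x1-x2) - (x2-x3))),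
    mul_nonneg h6 (sq_nonneg (x6 - (x2-x3) - (x3-x4)))]


set_option maxHeartbeats 1000000 in
theorem free_missing (G : ThreeGraph) (hcard : G.verts.card = 6)
    (hfree : G.Free K53minus) (v : ℕ) (hv : v ∈ G.verts) :
    2 ≤ (((G.verts \ {v}).powersetCard 3).filter (· ∉ G.edges)).card := by
  by_contra hlt
  push_neg at hlt
  set S : Finset ℕ := G.verts \ {v} with hSdef
  have hS : S.card = 5 := by
    rw [hSdef, card_sdiff_of_subset (by simpa using hv)]
    simp [hcard]
  have hM : ((S.powersetCard 3).filter (· ∉ G.edges)).card ≤ 1 := by omega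
  -- obtain t0 with property H
  obtain ⟨t0, ht0mem, H⟩ :
      ∃ t0 ∈ S.powersetCard 3, ∀ t ∈ S.powersetCard 3, t ≠ t0 → t ∈ G.edges := by
    rcases ((S.powersetCard 3).filter (· ∉ G.edges)).eq_empty_or_nonempty with hemp | ⟨t0, ht0⟩
    · obtain ⟨t0, ht0sub, ht0card⟩ := Finset.exists_subset_card_eq (show 3 ≤ S.card by omega)
      refine ⟨t0, Finset.mem_powersetCard.2 ⟨ht0sub, ht0card⟩, ?_⟩
      intro t ht _
      by_contra htE
      have : t ∈ ((S.powersetCard 3).filter (· ∉ G.edges)) := Finset.mem_filter.2 ⟨ht, htE⟩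
      simp [hemp] at this
    · have ht0' := Finset.mem_filter.1 ht0
      refine ⟨t0, ht0'.1, ?_⟩
      intro t ht hne
      by_contra htE
      have h2 : 1 < ((S.powersetCard 3).filter (· ∉ G.edges)).card :=
        Finset.one_lt_card.2 ⟨t, Finset.mem_filter.2 ⟨ht, htE⟩, t0, ht0, hne⟩
      omega
  obtain ⟨ht0sub, ht0card⟩ := Finset.mem_powersetCard.1 ht0mem
  obtain ⟨c, d, e, ncd, nce, nde, ht0⟩ := Finset.card_eq_three.1 ht0card
  have hrest : (S \ t0).card = 2 := by
    rw [card_sdiff_of_subset ht0sub]; omega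
  obtain ⟨a, b, nab, hrest2⟩ := Finset.card_eq_two.1 hrest
  have haR : a ∈ S \ t0 := by rw [hrest2]; simp
  have hbR : b ∈ S \ t0 := by rw [hrest2]; simp
  have haS : a ∈ S := (Finset.mem_sdiff.1 haR).1
  have hbS : b ∈ S := (Finset.mem_sdiff.1 hbR).1
  have ha0 : a ∉ t0 := (Finset.mem_sdiff.1 haR).2
  have hb0 : b ∉ t0 := (Finset.mem_sdiff.1 hbR).2
  have hcS : c ∈ S := ht0sub (by rw [ht0]; simp)
  have hdS : d ∈ S := ht0sub (by rw [ht0]; simp)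
  have heS : e ∈ S := ht0sub (by rw [ht0]; simp)
  have hc0 : c ∈ t0 := by rw [ht0]; simp
  have hd0 : d ∈ t0 := by rw [ht0]; simp
  have he0 : e ∈ t0 := by rw [ht0]; simp
  have nac : a ≠ c := fun h => ha0 (h ▸ hc0)
  have nad : a ≠ d := fun h => ha0 (h ▸ hd0)
  have nae : a ≠ e := fun h => ha0 (h ▸ he0)
  have nbc : b ≠ c := fun h => hb0 (h ▸ hc0)
  have nbd : b ≠ d := fun h => hb0 (h ▸ hd0)
  have nbe : b ≠ e := fun h => hb0 (h ▸ he0)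
  have hSsub : S ⊆ G.verts := Finset.sdiff_subset
  set f : ℕ → ℕ := fun n =>
    if n = 1 then a else if n = 2 then b else if n = 3 then c else
    if n = 4 then d else if n = 5 then e else 0 with hfdef
  have hf1 : f 1 = a := rfl
  have hf2 : f 2 = b := rfl
  have hf3 : f 3 = c := rfl
  have hf4 : f 4 = d := rfl
  have hf5 : f 5 = e := rfl
  apply hfree
  refine ⟨f, ?_, ?_, ?_⟩
  · have hverts : K53minus.verts = ({1, 2, 3, 4, 5} : Finset ℕ) := rfl
    intro x hx y hy hxy
    rw [hverts, Finset.coe_insert, Finset.coe_insert, Finset.coe_insert,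
      Finset.coe_insert, Finset.coe_singleton] at hx hy
    simp only [Set.mem_insert_iff, Set.mem_singleton_iff] at hx hy
    rcases hx with rfl | rfl | rfl | rfl | rfl <;>
      rcases hy with rfl | rfl | rfl | rfl | rfl <;>
      simp only [hf1, hf2, hf3, hf4, hf5] at hxy <;>
      first
        | rfl
        | exact absurd hxy (by assumption)
        | exact absurd hxy.symm (by assumption)
  · have hverts : K53minus.verts = ({1, 2, 3, 4, 5} : Finset ℕ) := rfl
    intro x hx
    rw [hverts] at hx
    simp only [Finset.mem_insert, Finset.mem_singleton] at hx
    rcases hx with rfl | rfl | rfl | rfl | rfl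
    · exact hf1 ▸ hSsub haS
    · exact hf2 ▸ hSsub hbS
    · exact hf3 ▸ hSsub hcS
    · exact hf4 ▸ hSsub hdS
    · exact hf5 ▸ hSsub heS
  · have hKe : K53minus.edges = ({{1,2,3},{1,2,4},{1,2,5},{1,3,4},{1,3,5},{1,4,5},{2,3,4},{2,3,5},{2,4,5}} : Finset (Finset ℕ)) := by decide
    intro t ht
    rw [hKe] at ht
    rw [ht0] at H ha0 hb0
    simp only [Finset.mem_insert, Finset.mem_singleton] at ht
    rcases ht with rfl | rfl | rfl | rfl | rfl | rfl | rfl | rfl | rfl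
    · show (Finset.image f {1, 2, 3}) ∈ G.edges
      have himg : Finset.image f {1, 2, 3} = {a, b, c} := by
        simp only [Finset.image_insert, Finset.image_singleton, hf1, hf2, hf3]
      rw [himg]
      refine H _ (Finset.mem_powersetCard.2 ⟨?_, ?_⟩) ?_
      · intro x hx
        simp only [Finset.mem_insert, Finset.mem_singleton] at hx
        rcases hx with rfl | rfl | rfl
        exacts [haS, hbS, hcS]
      · rw [Finset.card_eq_three]
        exact ⟨a, b, c, nab, nac, nbc, rfl⟩
      · intro heq
        exact ha0 (heq ▸ (by simp : a ∈ ({a, b, c} : Finset ℕ)))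
    · show (Finset.image f {1, 2, 4}) ∈ G.edges
      have himg : Finset.image f {1, 2, 4} = {a, b, d} := by
        simp only [Finset.image_insert, Finset.image_singleton, hf1, hf2, hf4]
      rw [himg]
      refine H _ (Finset.mem_powersetCard.2 ⟨?_, ?_⟩) ?_
      · intro x hx
        simp only [Finset.mem_insert, Finset.mem_singleton] at hx
        rcases hx with rfl | rfl | rfl
        exacts [haS, hbS, hdS]
      · rw [Finset.card_eq_three]
        exact ⟨a, b, d, nab, nad, nbd, rfl⟩
      · intro heq
        exact ha0 (heq ▸ (by simp : a ∈ ({a, b, d} : Finset ℕ)))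
    · show (Finset.image f {1, 2, 5}) ∈ G.edges
      have himg : Finset.image f {1, 2, 5} = {a, b, e} := by
        simp only [Finset.image_insert, Finset.image_singleton, hf1, hf2, hf5]
      rw [himg]
      refine H _ (Finset.mem_powersetCard.2 ⟨?_, ?_⟩) ?_
      · intro x hx
        simp only [Finset.mem_insert, Finset.mem_singleton] at hx
        rcases hx with rfl | rfl | rfl
        exacts [haS, hbS, heS]
      · rw [Finset.card_eq_three]
        exact ⟨a, b, e, nab, nae, nbe, rfl⟩
      · intro heq
        exact ha0 (heq ▸ (by simp : a ∈ ({a, b, e} : Finset ℕ)))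
    · show (Finset.image f {1, 3, 4}) ∈ G.edges
      have himg : Finset.image f {1, 3, 4} = {a, c, d} := by
        simp only [Finset.image_insert, Finset.image_singleton, hf1, hf3, hf4]
      rw [himg]
      refine H _ (Finset.mem_powersetCard.2 ⟨?_, ?_⟩) ?_
      · intro x hx
        simp only [Finset.mem_insert, Finset.mem_singleton] at hx
        rcases hx with rfl | rfl | rfl
        exacts [haS, hcS, hdS]
      · rw [Finset.card_eq_three]
        exact ⟨a, c, d, nac, nad, ncd, rfl⟩
      · intro heq
        exact ha0 (heq ▸ (by simp : a ∈ ({a, c, d} : Finset ℕ)))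
    · show (Finset.image f {1, 3, 5}) ∈ G.edges
      have himg : Finset.image f {1, 3, 5} = {a, c, e} := by
        simp only [Finset.image_insert, Finset.image_singleton, hf1, hf3, hf5]
      rw [himg]
      refine H _ (Finset.mem_powersetCard.2 ⟨?_, ?_⟩) ?_
      · intro x hx
        simp only [Finset.mem_insert, Finset.mem_singleton] at hx
        rcases hx with rfl | rfl | rfl
        exacts [haS, hcS, heS]
      · rw [Finset.card_eq_three]
        exact ⟨a, c, e, nac, nae, nce, rfl⟩
      · intro heq
        exact ha0 (heq ▸ (by simp : a ∈ ({a, c, e} : Finset ℕ)))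
    · show (Finset.image f {1, 4, 5}) ∈ G.edges
      have himg : Finset.image f {1, 4, 5} = {a, d, e} := by
        simp only [Finset.image_insert, Finset.image_singleton, hf1, hf4, hf5]
      rw [himg]
      refine H _ (Finset.mem_powersetCard.2 ⟨?_, ?_⟩) ?_
      · intro x hx
        simp only [Finset.mem_insert, Finset.mem_singleton] at hx
        rcases hx with rfl | rfl | rfl
        exacts [haS, hdS, heS]
      · rw [Finset.card_eq_three]
        exact ⟨a, d, e, nad, nae, nde, rfl⟩
      · intro heq
        exact ha0 (heq ▸ (by simp : a ∈ ({a, d, e} : Finset ℕ)))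
    · show (Finset.image f {2, 3, 4}) ∈ G.edges
      have himg : Finset.image f {2, 3, 4} = {b, c, d} := by
        simp only [Finset.image_insert, Finset.image_singleton, hf2, hf3, hf4]
      rw [himg]
      refine H _ (Finset.mem_powersetCard.2 ⟨?_, ?_⟩) ?_
      · intro x hx
        simp only [Finset.mem_insert, Finset.mem_singleton] at hx
        rcases hx with rfl | rfl | rfl
        exacts [hbS, hcS, hdS]
      · rw [Finset.card_eq_three]
        exact ⟨b, c, d, nbc, nbd, ncd, rfl⟩
      · intro heq
        exact hb0 (heq ▸ (by simp : b ∈ ({b, c, d} : Finset ℕ)))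
    · show (Finset.image f {2, 3, 5}) ∈ G.edges
      have himg : Finset.image f {2, 3, 5} = {b, c, e} := by
        simp only [Finset.image_insert, Finset.image_singleton, hf2, hf3, hf5]
      rw [himg]
      refine H _ (Finset.mem_powersetCard.2 ⟨?_, ?_⟩) ?_
      · intro x hx
        simp only [Finset.mem_insert, Finset.mem_singleton] at hx
        rcases hx with rfl | rfl | rfl
        exacts [hbS, hcS, heS]
      · rw [Finset.card_eq_three]
        exact ⟨b, c, e, nbc, nbe, nce, rfl⟩
      · intro heq
        exact hb0 (heq ▸ (by simp : b ∈ ({b, c, e} : Finset ℕ)))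
    · show (Finset.image f {2, 4, 5}) ∈ G.edges
      have himg : Finset.image f {2, 4, 5} = {b, d, e} := by
        simp only [Finset.image_insert, Finset.image_singleton, hf2, hf4, hf5]
      rw [himg]
      refine H _ (Finset.mem_powersetCard.2 ⟨?_, ?_⟩) ?_
      · intro x hx
        simp only [Finset.mem_insert, Finset.mem_singleton] at hx
        rcases hx with rfl | rfl | rfl
        exacts [hbS, hdS, heS]
      · rw [Finset.card_eq_three]
        exact ⟨b, d, e, nbd, nbe, nde, rfl⟩
      · intro heq
        exact hb0 (heq ▸ (by simp : b ∈ ({b, d, e} : Finset ℕ)))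


theorem edge_bound (G : ThreeGraph) (hcard : G.verts.card = 6)
    (hmiss : ∀ v ∈ G.verts, 2 ≤ (((G.verts \ {v}).powersetCard 3).filter (· ∉ G.edges)).card) :
    G.edges.card ≤ 16 := by
  have key : ∀ v ∈ G.verts, (G.edges.filter (fun e => v ∉ e)).card ≤ 8 := by
    intro v hv
    set A := G.edges.filter (fun e => v ∉ e) with hA
    set B := (G.verts \ {v}).powersetCard 3 with hB
    set M := B.filter (· ∉ G.edges) with hMdef
    have hAB : A ⊆ B := by
      intro e he
      obtain ⟨heE, hve⟩ := Finset.mem_filter.1 he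
      refine Finset.mem_powersetCard.2 ⟨?_, G.card_eq e heE⟩
      intro x hx
      exact Finset.mem_sdiff.2 ⟨G.edges_sub e heE hx,
        by simp only [Finset.mem_singleton]; rintro rfl; exact hve hx⟩
    have hdisj : Disjoint A M := by
      rw [Finset.disjoint_left]
      intro e heA heM
      exact (Finset.mem_filter.1 heM).2 (Finset.mem_filter.1 heA).1
    have hBcard : B.card = 10 := by
      rw [hB, Finset.card_powersetCard, Finset.card_sdiff_of_subset (by simpa using hv), hcard]
      rfl
    have hunion : (A ∪ M).card ≤ 10 := hBcard ▸ Finset.card_le_card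
      (Finset.union_subset hAB (Finset.filter_subset _ _))
    rw [Finset.card_union_of_disjoint hdisj] at hunion
    have hM2 : 2 ≤ M.card := hmiss v hv
    omega
  have hdouble : ∑ v ∈ G.verts, (G.edges.filter (fun e => v ∉ e)).card = 3 * G.edges.card := by
    have h1 : ∀ v, (G.edges.filter (fun e => v ∉ e)).card
        = ∑ e ∈ G.edges, if v ∉ e then 1 else 0 := by
      intro v; rw [Finset.card_filter]
    simp_rw [h1]
    rw [Finset.sum_comm]
    have h2 : ∀ e ∈ G.edges, (∑ v ∈ G.verts, if v ∉ e then 1 else 0) = 3 := by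
      intro e he
      rw [← Finset.card_filter]
      have : G.verts.filter (fun v => v ∉ e) = G.verts \ e := (Finset.sdiff_eq_filter _ _).symm
      rw [this, Finset.card_sdiff_of_subset (G.edges_sub e he), hcard, G.card_eq e he]
    rw [Finset.sum_congr rfl h2, Finset.sum_const, smul_eq_mul]
    ring
  have hsum : ∑ v ∈ G.verts, (G.edges.filter (fun e => v ∉ e)).card ≤ 6 * 8 := by
    calc ∑ v ∈ G.verts, (G.edges.filter (fun e => v ∉ e)).card
        ≤ ∑ _v ∈ G.verts, 8 := Finset.sum_le_sum key
      _ = 6 * 8 := by rw [Finset.sum_const, hcard]; ring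
  omega


lemma mono3 {u1 u2 u3 v1 v2 v3 : ℝ} (h1 : 0 ≤ u1) (h2 : 0 ≤ u2) (h3 : 0 ≤ u3)
    (e1 : u1 ≤ v1) (e2 : u2 ≤ v2) (e3 : u3 ≤ v3) : u1 * (u2 * u3) ≤ v1 * (v2 * v3) :=
  mul_le_mul e1 (mul_le_mul e2 e3 h3 (h2.trans e2)) (mul_nonneg h2 h3) (h1.trans e1)

open Finset
set_option maxHeartbeats 2000000 in
set_option maxRecDepth 100000 in
theorem fin6_bound (x : Fin 6 → ℝ)
    (hm : ∀ i j : Fin 6, i ≤ j → x j ≤ x i) (h5 : 0 ≤ x 5)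
    (hsum : x 0 + x 1 + x 2 + x 3 + x 4 + x 5 = 1)
    (E : Finset (Finset (Fin 6)))
    (hcard3 : ∀ t ∈ E, t.card = 3)
    (hmiss : ∀ k : Fin 6, 2 ≤ ((((univ : Finset (Fin 6)) \ {k}).powersetCard 3).filter (· ∉ E)).card) :
    ∑ t ∈ E, ∏ i ∈ t, x i ≤ 2 / 25 := by
  have hx : ∀ i : Fin 6, 0 ≤ x i := fun i => le_trans h5 (hm i 5 (by omega))
  -- vertex k = 0
  have hB0 : (((univ : Finset (Fin 6)) \ {(0 : Fin 6)}).powersetCard 3) = ({{1,2,3},{1,2,4},{1,2,5},{1,3,4},{1,3,5},{1,4,5},{2,3,4},{2,3,5},{2,4,5},{3,4,5}} : Finset (Finset (Fin 6))) := by decide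
  have L2_0 : ∀ t ∈ ({{1,2,3},{1,2,4},{1,2,5},{1,3,4},{1,3,5},{1,4,5},{2,3,4},{2,3,5},{2,4,5},{3,4,5}} : Finset (Finset (Fin 6))), t ≠ ({3,4,5} : Finset (Fin 6)) → x 2 * (x 4 * x 5) ≤ ∏ i ∈ t, x i := by
    intro t ht hne
    fin_cases ht
    · exact le_trans (mono3 (hx 2) (hx 4) (hx 5) (hm 1 2 (by decide)) (hm 2 4 (by decide)) (hm 3 5 (by decide))) (le_of_eq (by simp [Finset.prod_insert]))
    · exact le_trans (mono3 (hx 2) (hx 4) (hx 5) (hm 1 2 (by decide)) (hm 2 4 (by decide)) (hm 4 5 (by decide))) (le_of_eq (by simp [Finset.prod_insert]))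
    · exact le_trans (mono3 (hx 2) (hx 4) (hx 5) (hm 1 2 (by decide)) (hm 2 4 (by decide)) (hm 5 5 (by decide))) (le_of_eq (by simp [Finset.prod_insert]))
    · exact le_trans (mono3 (hx 2) (hx 4) (hx 5) (hm 1 2 (by decide)) (hm 3 4 (by decide)) (hm 4 5 (by decide))) (le_of_eq (by simp [Finset.prod_insert]))
    · exact le_trans (mono3 (hx 2) (hx 4) (hx 5) (hm 1 2 (by decide)) (hm 3 4 (by decide)) (hm 5 5 (by decide))) (le_of_eq (by simp [Finset.prod_insert]))
    · exact le_trans (mono3 (hx 2) (hx 4) (hx 5) (hm 1 2 (by decide)) (hm 4 4 (by decide)) (hm 5 5 (by decide))) (le_of_eq (by simp [Finset.prod_insert]))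
    · exact le_trans (mono3 (hx 2) (hx 4) (hx 5) (hm 2 2 (by decide)) (hm 3 4 (by decide)) (hm 4 5 (by decide))) (le_of_eq (by simp [Finset.prod_insert]))
    · exact le_trans (mono3 (hx 2) (hx 4) (hx 5) (hm 2 2 (by decide)) (hm 3 4 (by decide)) (hm 5 5 (by decide))) (le_of_eq (by simp [Finset.prod_insert]))
    · exact le_trans (mono3 (hx 2) (hx 4) (hx 5) (hm 2 2 (by decide)) (hm 4 4 (by decide)) (hm 5 5 (by decide))) (le_of_eq (by simp [Finset.prod_insert]))
    · exact absurd (by decide) hne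
  have hpq0 : x 3 * (x 4 * x 5) ≤ x 2 * (x 4 * x 5) :=
    mono3 (hx 3) (hx 4) (hx 5) (hm 2 3 (by decide)) le_rfl le_rfl
  have hs0 : ∑ t ∈ E.filter (fun t => (0 : Fin 6) ∉ t), ∏ i ∈ t, x i ≤
      (x 1 * (x 2 * x 3) + x 1 * (x 2 * x 4) + x 1 * (x 2 * x 5) + x 1 * (x 3 * x 4) + x 1 * (x 3 * x 5) + x 1 * (x 4 * x 5) + x 2 * (x 3 * x 4) + x 2 * (x 3 * x 5) + x 2 * (x 4 * x 5) + x 3 * (x 4 * x 5)) - (x 3 * (x 4 * x 5) + x 2 * (x 4 * x 5)) := by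
    have hm2 := hmiss 0
    rw [hB0] at hm2
    obtain ⟨t1, ht1, t2, ht2, hne12⟩ := Finset.one_lt_card.1 (lt_of_lt_of_le one_lt_two hm2)
    have ht1B := (Finset.mem_filter.1 ht1).1
    have ht1E := (Finset.mem_filter.1 ht1).2
    have ht2B := (Finset.mem_filter.1 ht2).1
    have ht2E := (Finset.mem_filter.1 ht2).2
    have hSlit : ∑ t ∈ ({{1,2,3},{1,2,4},{1,2,5},{1,3,4},{1,3,5},{1,4,5},{2,3,4},{2,3,5},{2,4,5},{3,4,5}} : Finset (Finset (Fin 6))), ∏ i ∈ t, x i = x 1 * (x 2 * x 3) + x 1 * (x 2 * x 4) + x 1 * (x 2 * x 5) + x 1 * (x 3 * x 4) + x 1 * (x 3 * x 5) + x 1 * (x 4 * x 5) + x 2 * (x 3 * x 4) + x 2 * (x 3 * x 5) + x 2 * (x 4 * x 5) + x 3 * (x 4 * x 5) := by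
      simp (config := { decide := true }) [Finset.sum_insert, Finset.prod_insert]
      ring
    have hsub : E.filter (fun t => (0 : Fin 6) ∉ t) ⊆ ({{1,2,3},{1,2,4},{1,2,5},{1,3,4},{1,3,5},{1,4,5},{2,3,4},{2,3,5},{2,4,5},{3,4,5}} : Finset (Finset (Fin 6))) \ {t1, t2} := by
      intro e he
      obtain ⟨heE, hk⟩ := Finset.mem_filter.1 he
      refine Finset.mem_sdiff.2 ⟨?_, ?_⟩
      · rw [← hB0]
        refine Finset.mem_powersetCard.2 ⟨?_, hcard3 e heE⟩
        intro y hy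
        simp only [Finset.mem_sdiff, Finset.mem_univ, Finset.mem_singleton, true_and]
        rintro rfl; exact hk hy
      · simp only [Finset.mem_insert, Finset.mem_singleton]
        rintro (rfl | rfl)
        exacts [ht1E heE, ht2E heE]
    have hstep : ∑ t ∈ E.filter (fun t => (0 : Fin 6) ∉ t), ∏ i ∈ t, x i ≤
        ∑ t ∈ (({{1,2,3},{1,2,4},{1,2,5},{1,3,4},{1,3,5},{1,4,5},{2,3,4},{2,3,5},{2,4,5},{3,4,5}} : Finset (Finset (Fin 6))) \ {t1, t2}), ∏ i ∈ t, x i :=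
      Finset.sum_le_sum_of_subset_of_nonneg hsub (fun t _ _ => Finset.prod_nonneg (fun i _ => hx i))
    have hsub12 : ({t1, t2} : Finset (Finset (Fin 6))) ⊆ ({{1,2,3},{1,2,4},{1,2,5},{1,3,4},{1,3,5},{1,4,5},{2,3,4},{2,3,5},{2,4,5},{3,4,5}} : Finset (Finset (Fin 6))) := by
      intro s hs
      simp only [Finset.mem_insert, Finset.mem_singleton] at hs
      rcases hs with rfl | rfl
      exacts [ht1B, ht2B]
    rw [Finset.sum_sdiff_eq_sub hsub12, Finset.sum_pair hne12, hSlit] at hstep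
    have hlow : x 3 * (x 4 * x 5) + x 2 * (x 4 * x 5) ≤ (∏ i ∈ t1, x i) + ∏ i ∈ t2, x i := by
      by_cases hb1 : t1 = ({3,4,5} : Finset (Fin 6))
      · have h2 : x 2 * (x 4 * x 5) ≤ ∏ i ∈ t2, x i := L2_0 t2 ht2B (fun h => hne12 (hb1.trans h.symm))
        have h1 : (∏ i ∈ t1, x i) = x 3 * (x 4 * x 5) := by rw [hb1]; simp [Finset.prod_insert]
        linarith
      · by_cases hb2 : t2 = ({3,4,5} : Finset (Fin 6))
        · have h1 : x 2 * (x 4 * x 5) ≤ ∏ i ∈ t1, x i := L2_0 t1 ht1B hb1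
          have h2 : (∏ i ∈ t2, x i) = x 3 * (x 4 * x 5) := by rw [hb2]; simp [Finset.prod_insert]
          linarith
        · have h1 : x 2 * (x 4 * x 5) ≤ ∏ i ∈ t1, x i := L2_0 t1 ht1B hb1
          have h2 : x 2 * (x 4 * x 5) ≤ ∏ i ∈ t2, x i := L2_0 t2 ht2B hb2
          linarith
    linarith
  -- vertex k = 1
  have hB1 : (((univ : Finset (Fin 6)) \ {(1 : Fin 6)}).powersetCard 3) = ({{0,2,3},{0,2,4},{0,2,5},{0,3,4},{0,3,5},{0,4,5},{2,3,4},{2,3,5},{2,4,5},{3,4,5}} : Finset (Finset (Fin 6))) := by decide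
  have L2_1 : ∀ t ∈ ({{0,2,3},{0,2,4},{0,2,5},{0,3,4},{0,3,5},{0,4,5},{2,3,4},{2,3,5},{2,4,5},{3,4,5}} : Finset (Finset (Fin 6))), t ≠ ({3,4,5} : Finset (Fin 6)) → x 2 * (x 4 * x 5) ≤ ∏ i ∈ t, x i := by
    intro t ht hne
    fin_cases ht
    · exact le_trans (mono3 (hx 2) (hx 4) (hx 5) (hm 0 2 (by decide)) (hm 2 4 (by decide)) (hm 3 5 (by decide))) (le_of_eq (by simp [Finset.prod_insert]))
    · exact le_trans (mono3 (hx 2) (hx 4) (hx 5) (hm 0 2 (by decide)) (hm 2 4 (by decide)) (hm 4 5 (by decide))) (le_of_eq (by simp [Finset.prod_insert]))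
    · exact le_trans (mono3 (hx 2) (hx 4) (hx 5) (hm 0 2 (by decide)) (hm 2 4 (by decide)) (hm 5 5 (by decide))) (le_of_eq (by simp [Finset.prod_insert]))
    · exact le_trans (mono3 (hx 2) (hx 4) (hx 5) (hm 0 2 (by decide)) (hm 3 4 (by decide)) (hm 4 5 (by decide))) (le_of_eq (by simp [Finset.prod_insert]))
    · exact le_trans (mono3 (hx 2) (hx 4) (hx 5) (hm 0 2 (by decide)) (hm 3 4 (by decide)) (hm 5 5 (by decide))) (le_of_eq (by simp [Finset.prod_insert]))
    · exact le_trans (mono3 (hx 2) (hx 4) (hx 5) (hm 0 2 (by decide)) (hm 4 4 (by decide)) (hm 5 5 (by decide))) (le_of_eq (by simp [Finset.prod_insert]))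
    · exact le_trans (mono3 (hx 2) (hx 4) (hx 5) (hm 2 2 (by decide)) (hm 3 4 (by decide)) (hm 4 5 (by decide))) (le_of_eq (by simp [Finset.prod_insert]))
    · exact le_trans (mono3 (hx 2) (hx 4) (hx 5) (hm 2 2 (by decide)) (hm 3 4 (by decide)) (hm 5 5 (by decide))) (le_of_eq (by simp [Finset.prod_insert]))
    · exact le_trans (mono3 (hx 2) (hx 4) (hx 5) (hm 2 2 (by decide)) (hm 4 4 (by decide)) (hm 5 5 (by decide))) (le_of_eq (by simp [Finset.prod_insert]))
    · exact absurd (by decide) hne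
  have hpq1 : x 3 * (x 4 * x 5) ≤ x 2 * (x 4 * x 5) :=
    mono3 (hx 3) (hx 4) (hx 5) (hm 2 3 (by decide)) le_rfl le_rfl
  have hs1 : ∑ t ∈ E.filter (fun t => (1 : Fin 6) ∉ t), ∏ i ∈ t, x i ≤
      (x 0 * (x 2 * x 3) + x 0 * (x 2 * x 4) + x 0 * (x 2 * x 5) + x 0 * (x 3 * x 4) + x 0 * (x 3 * x 5) + x 0 * (x 4 * x 5) + x 2 * (x 3 * x 4) + x 2 * (x 3 * x 5) + x 2 * (x 4 * x 5) + x 3 * (x 4 * x 5)) - (x 3 * (x 4 * x 5) + x 2 * (x 4 * x 5)) := by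
    have hm2 := hmiss 1
    rw [hB1] at hm2
    obtain ⟨t1, ht1, t2, ht2, hne12⟩ := Finset.one_lt_card.1 (lt_of_lt_of_le one_lt_two hm2)
    have ht1B := (Finset.mem_filter.1 ht1).1
    have ht1E := (Finset.mem_filter.1 ht1).2
    have ht2B := (Finset.mem_filter.1 ht2).1
    have ht2E := (Finset.mem_filter.1 ht2).2
    have hSlit : ∑ t ∈ ({{0,2,3},{0,2,4},{0,2,5},{0,3,4},{0,3,5},{0,4,5},{2,3,4},{2,3,5},{2,4,5},{3,4,5}} : Finset (Finset (Fin 6))), ∏ i ∈ t, x i = x 0 * (x 2 * x 3) + x 0 * (x 2 * x 4) + x 0 * (x 2 * x 5) + x 0 * (x 3 * x 4) + x 0 * (x 3 * x 5) + x 0 * (x 4 * x 5) + x 2 * (x 3 * x 4) + x 2 * (x 3 * x 5) + x 2 * (x 4 * x 5) + x 3 * (x 4 * x 5) := by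
      simp (config := { decide := true }) [Finset.sum_insert, Finset.prod_insert]
      ring
    have hsub : E.filter (fun t => (1 : Fin 6) ∉ t) ⊆ ({{0,2,3},{0,2,4},{0,2,5},{0,3,4},{0,3,5},{0,4,5},{2,3,4},{2,3,5},{2,4,5},{3,4,5}} : Finset (Finset (Fin 6))) \ {t1, t2} := by
      intro e he
      obtain ⟨heE, hk⟩ := Finset.mem_filter.1 he
      refine Finset.mem_sdiff.2 ⟨?_, ?_⟩
      · rw [← hB1]
        refine Finset.mem_powersetCard.2 ⟨?_, hcard3 e heE⟩
        intro y hy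
        simp only [Finset.mem_sdiff, Finset.mem_univ, Finset.mem_singleton, true_and]
        rintro rfl; exact hk hy
      · simp only [Finset.mem_insert, Finset.mem_singleton]
        rintro (rfl | rfl)
        exacts [ht1E heE, ht2E heE]
    have hstep : ∑ t ∈ E.filter (fun t => (1 : Fin 6) ∉ t), ∏ i ∈ t, x i ≤
        ∑ t ∈ (({{0,2,3},{0,2,4},{0,2,5},{0,3,4},{0,3,5},{0,4,5},{2,3,4},{2,3,5},{2,4,5},{3,4,5}} : Finset (Finset (Fin 6))) \ {t1, t2}), ∏ i ∈ t, x i :=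
      Finset.sum_le_sum_of_subset_of_nonneg hsub (fun t _ _ => Finset.prod_nonneg (fun i _ => hx i))
    have hsub12 : ({t1, t2} : Finset (Finset (Fin 6))) ⊆ ({{0,2,3},{0,2,4},{0,2,5},{0,3,4},{0,3,5},{0,4,5},{2,3,4},{2,3,5},{2,4,5},{3,4,5}} : Finset (Finset (Fin 6))) := by
      intro s hs
      simp only [Finset.mem_insert, Finset.mem_singleton] at hs
      rcases hs with rfl | rfl
      exacts [ht1B, ht2B]
    rw [Finset.sum_sdiff_eq_sub hsub12, Finset.sum_pair hne12, hSlit] at hstep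
    have hlow : x 3 * (x 4 * x 5) + x 2 * (x 4 * x 5) ≤ (∏ i ∈ t1, x i) + ∏ i ∈ t2, x i := by
      by_cases hb1 : t1 = ({3,4,5} : Finset (Fin 6))
      · have h2 : x 2 * (x 4 * x 5) ≤ ∏ i ∈ t2, x i := L2_1 t2 ht2B (fun h => hne12 (hb1.trans h.symm))
        have h1 : (∏ i ∈ t1, x i) = x 3 * (x 4 * x 5) := by rw [hb1]; simp [Finset.prod_insert]
        linarith
      · by_cases hb2 : t2 = ({3,4,5} : Finset (Fin 6))
        · have h1 : x 2 * (x 4 * x 5) ≤ ∏ i ∈ t1, x i := L2_1 t1 ht1B hb1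
          have h2 : (∏ i ∈ t2, x i) = x 3 * (x 4 * x 5) := by rw [hb2]; simp [Finset.prod_insert]
          linarith
        · have h1 : x 2 * (x 4 * x 5) ≤ ∏ i ∈ t1, x i := L2_1 t1 ht1B hb1
          have h2 : x 2 * (x 4 * x 5) ≤ ∏ i ∈ t2, x i := L2_1 t2 ht2B hb2
          linarith
    linarith
  -- vertex k = 2
  have hB2 : (((univ : Finset (Fin 6)) \ {(2 : Fin 6)}).powersetCard 3) = ({{0,1,3},{0,1,4},{0,1,5},{0,3,4},{0,3,5},{0,4,5},{1,3,4},{1,3,5},{1,4,5},{3,4,5}} : Finset (Finset (Fin 6))) := by decide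
  have L2_2 : ∀ t ∈ ({{0,1,3},{0,1,4},{0,1,5},{0,3,4},{0,3,5},{0,4,5},{1,3,4},{1,3,5},{1,4,5},{3,4,5}} : Finset (Finset (Fin 6))), t ≠ ({3,4,5} : Finset (Fin 6)) → x 1 * (x 4 * x 5) ≤ ∏ i ∈ t, x i := by
    intro t ht hne
    fin_cases ht
    · exact le_trans (mono3 (hx 1) (hx 4) (hx 5) (hm 0 1 (by decide)) (hm 1 4 (by decide)) (hm 3 5 (by decide))) (le_of_eq (by simp [Finset.prod_insert]))
    · exact le_trans (mono3 (hx 1) (hx 4) (hx 5) (hm 0 1 (by decide)) (hm 1 4 (by decide)) (hm 4 5 (by decide))) (le_of_eq (by simp [Finset.prod_insert]))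
    · exact le_trans (mono3 (hx 1) (hx 4) (hx 5) (hm 0 1 (by decide)) (hm 1 4 (by decide)) (hm 5 5 (by decide))) (le_of_eq (by simp [Finset.prod_insert]))
    · exact le_trans (mono3 (hx 1) (hx 4) (hx 5) (hm 0 1 (by decide)) (hm 3 4 (by decide)) (hm 4 5 (by decide))) (le_of_eq (by simp [Finset.prod_insert]))
    · exact le_trans (mono3 (hx 1) (hx 4) (hx 5) (hm 0 1 (by decide)) (hm 3 4 (by decide)) (hm 5 5 (by decide))) (le_of_eq (by simp [Finset.prod_insert]))
    · exact le_trans (mono3 (hx 1) (hx 4) (hx 5) (hm 0 1 (by decide)) (hm 4 4 (by decide)) (hm 5 5 (by decide))) (le_of_eq (by simp [Finset.prod_insert]))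
    · exact le_trans (mono3 (hx 1) (hx 4) (hx 5) (hm 1 1 (by decide)) (hm 3 4 (by decide)) (hm 4 5 (by decide))) (le_of_eq (by simp [Finset.prod_insert]))
    · exact le_trans (mono3 (hx 1) (hx 4) (hx 5) (hm 1 1 (by decide)) (hm 3 4 (by decide)) (hm 5 5 (by decide))) (le_of_eq (by simp [Finset.prod_insert]))
    · exact le_trans (mono3 (hx 1) (hx 4) (hx 5) (hm 1 1 (by decide)) (hm 4 4 (by decide)) (hm 5 5 (by decide))) (le_of_eq (by simp [Finset.prod_insert]))
    · exact absurd (by decide) hne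
  have hpq2 : x 3 * (x 4 * x 5) ≤ x 1 * (x 4 * x 5) :=
    mono3 (hx 3) (hx 4) (hx 5) (hm 1 3 (by decide)) le_rfl le_rfl
  have hs2 : ∑ t ∈ E.filter (fun t => (2 : Fin 6) ∉ t), ∏ i ∈ t, x i ≤
      (x 0 * (x 1 * x 3) + x 0 * (x 1 * x 4) + x 0 * (x 1 * x 5) + x 0 * (x 3 * x 4) + x 0 * (x 3 * x 5) + x 0 * (x 4 * x 5) + x 1 * (x 3 * x 4) + x 1 * (x 3 * x 5) + x 1 * (x 4 * x 5) + x 3 * (x 4 * x 5)) - (x 3 * (x 4 * x 5) + x 1 * (x 4 * x 5)) := by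
    have hm2 := hmiss 2
    rw [hB2] at hm2
    obtain ⟨t1, ht1, t2, ht2, hne12⟩ := Finset.one_lt_card.1 (lt_of_lt_of_le one_lt_two hm2)
    have ht1B := (Finset.mem_filter.1 ht1).1
    have ht1E := (Finset.mem_filter.1 ht1).2
    have ht2B := (Finset.mem_filter.1 ht2).1
    have ht2E := (Finset.mem_filter.1 ht2).2
    have hSlit : ∑ t ∈ ({{0,1,3},{0,1,4},{0,1,5},{0,3,4},{0,3,5},{0,4,5},{1,3,4},{1,3,5},{1,4,5},{3,4,5}} : Finset (Finset (Fin 6))), ∏ i ∈ t, x i = x 0 * (x 1 * x 3) + x 0 * (x 1 * x 4) + x 0 * (x 1 * x 5) + x 0 * (x 3 * x 4) + x 0 * (x 3 * x 5) + x 0 * (x 4 * x 5) + x 1 * (x 3 * x 4) + x 1 * (x 3 * x 5) + x 1 * (x 4 * x 5) + x 3 * (x 4 * x 5) := by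
      simp (config := { decide := true }) [Finset.sum_insert, Finset.prod_insert]
      ring
    have hsub : E.filter (fun t => (2 : Fin 6) ∉ t) ⊆ ({{0,1,3},{0,1,4},{0,1,5},{0,3,4},{0,3,5},{0,4,5},{1,3,4},{1,3,5},{1,4,5},{3,4,5}} : Finset (Finset (Fin 6))) \ {t1, t2} := by
      intro e he
      obtain ⟨heE, hk⟩ := Finset.mem_filter.1 he
      refine Finset.mem_sdiff.2 ⟨?_, ?_⟩
      · rw [← hB2]
        refine Finset.mem_powersetCard.2 ⟨?_, hcard3 e heE⟩
        intro y hy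
        simp only [Finset.mem_sdiff, Finset.mem_univ, Finset.mem_singleton, true_and]
        rintro rfl; exact hk hy
      · simp only [Finset.mem_insert, Finset.mem_singleton]
        rintro (rfl | rfl)
        exacts [ht1E heE, ht2E heE]
    have hstep : ∑ t ∈ E.filter (fun t => (2 : Fin 6) ∉ t), ∏ i ∈ t, x i ≤
        ∑ t ∈ (({{0,1,3},{0,1,4},{0,1,5},{0,3,4},{0,3,5},{0,4,5},{1,3,4},{1,3,5},{1,4,5},{3,4,5}} : Finset (Finset (Fin 6))) \ {t1, t2}), ∏ i ∈ t, x i :=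
      Finset.sum_le_sum_of_subset_of_nonneg hsub (fun t _ _ => Finset.prod_nonneg (fun i _ => hx i))
    have hsub12 : ({t1, t2} : Finset (Finset (Fin 6))) ⊆ ({{0,1,3},{0,1,4},{0,1,5},{0,3,4},{0,3,5},{0,4,5},{1,3,4},{1,3,5},{1,4,5},{3,4,5}} : Finset (Finset (Fin 6))) := by
      intro s hs
      simp only [Finset.mem_insert, Finset.mem_singleton] at hs
      rcases hs with rfl | rfl
      exacts [ht1B, ht2B]
    rw [Finset.sum_sdiff_eq_sub hsub12, Finset.sum_pair hne12, hSlit] at hstep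
    have hlow : x 3 * (x 4 * x 5) + x 1 * (x 4 * x 5) ≤ (∏ i ∈ t1, x i) + ∏ i ∈ t2, x i := by
      by_cases hb1 : t1 = ({3,4,5} : Finset (Fin 6))
      · have h2 : x 1 * (x 4 * x 5) ≤ ∏ i ∈ t2, x i := L2_2 t2 ht2B (fun h => hne12 (hb1.trans h.symm))
        have h1 : (∏ i ∈ t1, x i) = x 3 * (x 4 * x 5) := by rw [hb1]; simp [Finset.prod_insert]
        linarith
      · by_cases hb2 : t2 = ({3,4,5} : Finset (Fin 6))
        · have h1 : x 1 * (x 4 * x 5) ≤ ∏ i ∈ t1, x i := L2_2 t1 ht1B hb1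
          have h2 : (∏ i ∈ t2, x i) = x 3 * (x 4 * x 5) := by rw [hb2]; simp [Finset.prod_insert]
          linarith
        · have h1 : x 1 * (x 4 * x 5) ≤ ∏ i ∈ t1, x i := L2_2 t1 ht1B hb1
          have h2 : x 1 * (x 4 * x 5) ≤ ∏ i ∈ t2, x i := L2_2 t2 ht2B hb2
          linarith
    linarith
  -- vertex k = 3
  have hB3 : (((univ : Finset (Fin 6)) \ {(3 : Fin 6)}).powersetCard 3) = ({{0,1,2},{0,1,4},{0,1,5},{0,2,4},{0,2,5},{0,4,5},{1,2,4},{1,2,5},{1,4,5},{2,4,5}} : Finset (Finset (Fin 6))) := by decide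
  have L2_3 : ∀ t ∈ ({{0,1,2},{0,1,4},{0,1,5},{0,2,4},{0,2,5},{0,4,5},{1,2,4},{1,2,5},{1,4,5},{2,4,5}} : Finset (Finset (Fin 6))), t ≠ ({2,4,5} : Finset (Fin 6)) → x 1 * (x 4 * x 5) ≤ ∏ i ∈ t, x i := by
    intro t ht hne
    fin_cases ht
    · exact le_trans (mono3 (hx 1) (hx 4) (hx 5) (hm 0 1 (by decide)) (hm 1 4 (by decide)) (hm 2 5 (by decide))) (le_of_eq (by simp [Finset.prod_insert]))
    · exact le_trans (mono3 (hx 1) (hx 4) (hx 5) (hm 0 1 (by decide)) (hm 1 4 (by decide)) (hm 4 5 (by decide))) (le_of_eq (by simp [Finset.prod_insert]))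
    · exact le_trans (mono3 (hx 1) (hx 4) (hx 5) (hm 0 1 (by decide)) (hm 1 4 (by decide)) (hm 5 5 (by decide))) (le_of_eq (by simp [Finset.prod_insert]))
    · exact le_trans (mono3 (hx 1) (hx 4) (hx 5) (hm 0 1 (by decide)) (hm 2 4 (by decide)) (hm 4 5 (by decide))) (le_of_eq (by simp [Finset.prod_insert]))
    · exact le_trans (mono3 (hx 1) (hx 4) (hx 5) (hm 0 1 (by decide)) (hm 2 4 (by decide)) (hm 5 5 (by decide))) (le_of_eq (by simp [Finset.prod_insert]))
    · exact le_trans (mono3 (hx 1) (hx 4) (hx 5) (hm 0 1 (by decide)) (hm 4 4 (by decide)) (hm 5 5 (by decide))) (le_of_eq (by simp [Finset.prod_insert]))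
    · exact le_trans (mono3 (hx 1) (hx 4) (hx 5) (hm 1 1 (by decide)) (hm 2 4 (by decide)) (hm 4 5 (by decide))) (le_of_eq (by simp [Finset.prod_insert]))
    · exact le_trans (mono3 (hx 1) (hx 4) (hx 5) (hm 1 1 (by decide)) (hm 2 4 (by decide)) (hm 5 5 (by decide))) (le_of_eq (by simp [Finset.prod_insert]))
    · exact le_trans (mono3 (hx 1) (hx 4) (hx 5) (hm 1 1 (by decide)) (hm 4 4 (by decide)) (hm 5 5 (by decide))) (le_of_eq (by simp [Finset.prod_insert]))
    · exact absurd (by decide) hne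
  have hpq3 : x 2 * (x 4 * x 5) ≤ x 1 * (x 4 * x 5) :=
    mono3 (hx 2) (hx 4) (hx 5) (hm 1 2 (by decide)) le_rfl le_rfl
  have hs3 : ∑ t ∈ E.filter (fun t => (3 : Fin 6) ∉ t), ∏ i ∈ t, x i ≤
      (x 0 * (x 1 * x 2) + x 0 * (x 1 * x 4) + x 0 * (x 1 * x 5) + x 0 * (x 2 * x 4) + x 0 * (x 2 * x 5) + x 0 * (x 4 * x 5) + x 1 * (x 2 * x 4) + x 1 * (x 2 * x 5) + x 1 * (x 4 * x 5) + x 2 * (x 4 * x 5)) - (x 2 * (x 4 * x 5) + x 1 * (x 4 * x 5)) := by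
    have hm2 := hmiss 3
    rw [hB3] at hm2
    obtain ⟨t1, ht1, t2, ht2, hne12⟩ := Finset.one_lt_card.1 (lt_of_lt_of_le one_lt_two hm2)
    have ht1B := (Finset.mem_filter.1 ht1).1
    have ht1E := (Finset.mem_filter.1 ht1).2
    have ht2B := (Finset.mem_filter.1 ht2).1
    have ht2E := (Finset.mem_filter.1 ht2).2
    have hSlit : ∑ t ∈ ({{0,1,2},{0,1,4},{0,1,5},{0,2,4},{0,2,5},{0,4,5},{1,2,4},{1,2,5},{1,4,5},{2,4,5}} : Finset (Finset (Fin 6))), ∏ i ∈ t, x i = x 0 * (x 1 * x 2) + x 0 * (x 1 * x 4) + x 0 * (x 1 * x 5) + x 0 * (x 2 * x 4) + x 0 * (x 2 * x 5) + x 0 * (x 4 * x 5) + x 1 * (x 2 * x 4) + x 1 * (x 2 * x 5) + x 1 * (x 4 * x 5) + x 2 * (x 4 * x 5) := by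
      simp (config := { decide := true }) [Finset.sum_insert, Finset.prod_insert]
      ring
    have hsub : E.filter (fun t => (3 : Fin 6) ∉ t) ⊆ ({{0,1,2},{0,1,4},{0,1,5},{0,2,4},{0,2,5},{0,4,5},{1,2,4},{1,2,5},{1,4,5},{2,4,5}} : Finset (Finset (Fin 6))) \ {t1, t2} := by
      intro e he
      obtain ⟨heE, hk⟩ := Finset.mem_filter.1 he
      refine Finset.mem_sdiff.2 ⟨?_, ?_⟩
      · rw [← hB3]
        refine Finset.mem_powersetCard.2 ⟨?_, hcard3 e heE⟩
        intro y hy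
        simp only [Finset.mem_sdiff, Finset.mem_univ, Finset.mem_singleton, true_and]
        rintro rfl; exact hk hy
      · simp only [Finset.mem_insert, Finset.mem_singleton]
        rintro (rfl | rfl)
        exacts [ht1E heE, ht2E heE]
    have hstep : ∑ t ∈ E.filter (fun t => (3 : Fin 6) ∉ t), ∏ i ∈ t, x i ≤
        ∑ t ∈ (({{0,1,2},{0,1,4},{0,1,5},{0,2,4},{0,2,5},{0,4,5},{1,2,4},{1,2,5},{1,4,5},{2,4,5}} : Finset (Finset (Fin 6))) \ {t1, t2}), ∏ i ∈ t, x i :=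
      Finset.sum_le_sum_of_subset_of_nonneg hsub (fun t _ _ => Finset.prod_nonneg (fun i _ => hx i))
    have hsub12 : ({t1, t2} : Finset (Finset (Fin 6))) ⊆ ({{0,1,2},{0,1,4},{0,1,5},{0,2,4},{0,2,5},{0,4,5},{1,2,4},{1,2,5},{1,4,5},{2,4,5}} : Finset (Finset (Fin 6))) := by
      intro s hs
      simp only [Finset.mem_insert, Finset.mem_singleton] at hs
      rcases hs with rfl | rfl
      exacts [ht1B, ht2B]
    rw [Finset.sum_sdiff_eq_sub hsub12, Finset.sum_pair hne12, hSlit] at hstep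
    have hlow : x 2 * (x 4 * x 5) + x 1 * (x 4 * x 5) ≤ (∏ i ∈ t1, x i) + ∏ i ∈ t2, x i := by
      by_cases hb1 : t1 = ({2,4,5} : Finset (Fin 6))
      · have h2 : x 1 * (x 4 * x 5) ≤ ∏ i ∈ t2, x i := L2_3 t2 ht2B (fun h => hne12 (hb1.trans h.symm))
        have h1 : (∏ i ∈ t1, x i) = x 2 * (x 4 * x 5) := by rw [hb1]; simp [Finset.prod_insert]
        linarith
      · by_cases hb2 : t2 = ({2,4,5} : Finset (Fin 6))
        · have h1 : x 1 * (x 4 * x 5) ≤ ∏ i ∈ t1, x i := L2_3 t1 ht1B hb1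
          have h2 : (∏ i ∈ t2, x i) = x 2 * (x 4 * x 5) := by rw [hb2]; simp [Finset.prod_insert]
          linarith
        · have h1 : x 1 * (x 4 * x 5) ≤ ∏ i ∈ t1, x i := L2_3 t1 ht1B hb1
          have h2 : x 1 * (x 4 * x 5) ≤ ∏ i ∈ t2, x i := L2_3 t2 ht2B hb2
          linarith
    linarith
  -- vertex k = 4
  have hB4 : (((univ : Finset (Fin 6)) \ {(4 : Fin 6)}).powersetCard 3) = ({{0,1,2},{0,1,3},{0,1,5},{0,2,3},{0,2,5},{0,3,5},{1,2,3},{1,2,5},{1,3,5},{2,3,5}} : Finset (Finset (Fin 6))) := by decide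
  have L2_4 : ∀ t ∈ ({{0,1,2},{0,1,3},{0,1,5},{0,2,3},{0,2,5},{0,3,5},{1,2,3},{1,2,5},{1,3,5},{2,3,5}} : Finset (Finset (Fin 6))), t ≠ ({2,3,5} : Finset (Fin 6)) → x 1 * (x 3 * x 5) ≤ ∏ i ∈ t, x i := by
    intro t ht hne
    fin_cases ht
    · exact le_trans (mono3 (hx 1) (hx 3) (hx 5) (hm 0 1 (by decide)) (hm 1 3 (by decide)) (hm 2 5 (by decide))) (le_of_eq (by simp [Finset.prod_insert]))
    · exact le_trans (mono3 (hx 1) (hx 3) (hx 5) (hm 0 1 (by decide)) (hm 1 3 (by decide)) (hm 3 5 (by decide))) (le_of_eq (by simp [Finset.prod_insert]))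
    · exact le_trans (mono3 (hx 1) (hx 3) (hx 5) (hm 0 1 (by decide)) (hm 1 3 (by decide)) (hm 5 5 (by decide))) (le_of_eq (by simp [Finset.prod_insert]))
    · exact le_trans (mono3 (hx 1) (hx 3) (hx 5) (hm 0 1 (by decide)) (hm 2 3 (by decide)) (hm 3 5 (by decide))) (le_of_eq (by simp [Finset.prod_insert]))
    · exact le_trans (mono3 (hx 1) (hx 3) (hx 5) (hm 0 1 (by decide)) (hm 2 3 (by decide)) (hm 5 5 (by decide))) (le_of_eq (by simp [Finset.prod_insert]))
    · exact le_trans (mono3 (hx 1) (hx 3) (hx 5) (hm 0 1 (by decide)) (hm 3 3 (by decide)) (hm 5 5 (by decide))) (le_of_eq (by simp [Finset.prod_insert]))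
    · exact le_trans (mono3 (hx 1) (hx 3) (hx 5) (hm 1 1 (by decide)) (hm 2 3 (by decide)) (hm 3 5 (by decide))) (le_of_eq (by simp [Finset.prod_insert]))
    · exact le_trans (mono3 (hx 1) (hx 3) (hx 5) (hm 1 1 (by decide)) (hm 2 3 (by decide)) (hm 5 5 (by decide))) (le_of_eq (by simp [Finset.prod_insert]))
    · exact le_trans (mono3 (hx 1) (hx 3) (hx 5) (hm 1 1 (by decide)) (hm 3 3 (by decide)) (hm 5 5 (by decide))) (le_of_eq (by simp [Finset.prod_insert]))
    · exact absurd (by decide) hne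
  have hpq4 : x 2 * (x 3 * x 5) ≤ x 1 * (x 3 * x 5) :=
    mono3 (hx 2) (hx 3) (hx 5) (hm 1 2 (by decide)) le_rfl le_rfl
  have hs4 : ∑ t ∈ E.filter (fun t => (4 : Fin 6) ∉ t), ∏ i ∈ t, x i ≤
      (x 0 * (x 1 * x 2) + x 0 * (x 1 * x 3) + x 0 * (x 1 * x 5) + x 0 * (x 2 * x 3) + x 0 * (x 2 * x 5) + x 0 * (x 3 * x 5) + x 1 * (x 2 * x 3) + x 1 * (x 2 * x 5) + x 1 * (x 3 * x 5) + x 2 * (x 3 * x 5)) - (x 2 * (x 3 * x 5) + x 1 * (x 3 * x 5)) := by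
    have hm2 := hmiss 4
    rw [hB4] at hm2
    obtain ⟨t1, ht1, t2, ht2, hne12⟩ := Finset.one_lt_card.1 (lt_of_lt_of_le one_lt_two hm2)
    have ht1B := (Finset.mem_filter.1 ht1).1
    have ht1E := (Finset.mem_filter.1 ht1).2
    have ht2B := (Finset.mem_filter.1 ht2).1
    have ht2E := (Finset.mem_filter.1 ht2).2
    have hSlit : ∑ t ∈ ({{0,1,2},{0,1,3},{0,1,5},{0,2,3},{0,2,5},{0,3,5},{1,2,3},{1,2,5},{1,3,5},{2,3,5}} : Finset (Finset (Fin 6))), ∏ i ∈ t, x i = x 0 * (x 1 * x 2) + x 0 * (x 1 * x 3) + x 0 * (x 1 * x 5) + x 0 * (x 2 * x 3) + x 0 * (x 2 * x 5) + x 0 * (x 3 * x 5) + x 1 * (x 2 * x 3) + x 1 * (x 2 * x 5) + x 1 * (x 3 * x 5) + x 2 * (x 3 * x 5) := by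
      simp (config := { decide := true }) [Finset.sum_insert, Finset.prod_insert]
      ring
    have hsub : E.filter (fun t => (4 : Fin 6) ∉ t) ⊆ ({{0,1,2},{0,1,3},{0,1,5},{0,2,3},{0,2,5},{0,3,5},{1,2,3},{1,2,5},{1,3,5},{2,3,5}} : Finset (Finset (Fin 6))) \ {t1, t2} := by
      intro e he
      obtain ⟨heE, hk⟩ := Finset.mem_filter.1 he
      refine Finset.mem_sdiff.2 ⟨?_, ?_⟩
      · rw [← hB4]
        refine Finset.mem_powersetCard.2 ⟨?_, hcard3 e heE⟩
        intro y hy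
        simp only [Finset.mem_sdiff, Finset.mem_univ, Finset.mem_singleton, true_and]
        rintro rfl; exact hk hy
      · simp only [Finset.mem_insert, Finset.mem_singleton]
        rintro (rfl | rfl)
        exacts [ht1E heE, ht2E heE]
    have hstep : ∑ t ∈ E.filter (fun t => (4 : Fin 6) ∉ t), ∏ i ∈ t, x i ≤
        ∑ t ∈ (({{0,1,2},{0,1,3},{0,1,5},{0,2,3},{0,2,5},{0,3,5},{1,2,3},{1,2,5},{1,3,5},{2,3,5}} : Finset (Finset (Fin 6))) \ {t1, t2}), ∏ i ∈ t, x i :=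
      Finset.sum_le_sum_of_subset_of_nonneg hsub (fun t _ _ => Finset.prod_nonneg (fun i _ => hx i))
    have hsub12 : ({t1, t2} : Finset (Finset (Fin 6))) ⊆ ({{0,1,2},{0,1,3},{0,1,5},{0,2,3},{0,2,5},{0,3,5},{1,2,3},{1,2,5},{1,3,5},{2,3,5}} : Finset (Finset (Fin 6))) := by
      intro s hs
      simp only [Finset.mem_insert, Finset.mem_singleton] at hs
      rcases hs with rfl | rfl
      exacts [ht1B, ht2B]
    rw [Finset.sum_sdiff_eq_sub hsub12, Finset.sum_pair hne12, hSlit] at hstep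
    have hlow : x 2 * (x 3 * x 5) + x 1 * (x 3 * x 5) ≤ (∏ i ∈ t1, x i) + ∏ i ∈ t2, x i := by
      by_cases hb1 : t1 = ({2,3,5} : Finset (Fin 6))
      · have h2 : x 1 * (x 3 * x 5) ≤ ∏ i ∈ t2, x i := L2_4 t2 ht2B (fun h => hne12 (hb1.trans h.symm))
        have h1 : (∏ i ∈ t1, x i) = x 2 * (x 3 * x 5) := by rw [hb1]; simp [Finset.prod_insert]
        linarith
      · by_cases hb2 : t2 = ({2,3,5} : Finset (Fin 6))
        · have h1 : x 1 * (x 3 * x 5) ≤ ∏ i ∈ t1, x i := L2_4 t1 ht1B hb1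
          have h2 : (∏ i ∈ t2, x i) = x 2 * (x 3 * x 5) := by rw [hb2]; simp [Finset.prod_insert]
          linarith
        · have h1 : x 1 * (x 3 * x 5) ≤ ∏ i ∈ t1, x i := L2_4 t1 ht1B hb1
          have h2 : x 1 * (x 3 * x 5) ≤ ∏ i ∈ t2, x i := L2_4 t2 ht2B hb2
          linarith
    linarith
  -- vertex k = 5
  have hB5 : (((univ : Finset (Fin 6)) \ {(5 : Fin 6)}).powersetCard 3) = ({{0,1,2},{0,1,3},{0,1,4},{0,2,3},{0,2,4},{0,3,4},{1,2,3},{1,2,4},{1,3,4},{2,3,4}} : Finset (Finset (Fin 6))) := by decide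
  have L2_5 : ∀ t ∈ ({{0,1,2},{0,1,3},{0,1,4},{0,2,3},{0,2,4},{0,3,4},{1,2,3},{1,2,4},{1,3,4},{2,3,4}} : Finset (Finset (Fin 6))), t ≠ ({2,3,4} : Finset (Fin 6)) → x 1 * (x 3 * x 4) ≤ ∏ i ∈ t, x i := by
    intro t ht hne
    fin_cases ht
    · exact le_trans (mono3 (hx 1) (hx 3) (hx 4) (hm 0 1 (by decide)) (hm 1 3 (by decide)) (hm 2 4 (by decide))) (le_of_eq (by simp [Finset.prod_insert]))
    · exact le_trans (mono3 (hx 1) (hx 3) (hx 4) (hm 0 1 (by decide)) (hm 1 3 (by decide)) (hm 3 4 (by decide))) (le_of_eq (by simp [Finset.prod_insert]))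
    · exact le_trans (mono3 (hx 1) (hx 3) (hx 4) (hm 0 1 (by decide)) (hm 1 3 (by decide)) (hm 4 4 (by decide))) (le_of_eq (by simp [Finset.prod_insert]))
    · exact le_trans (mono3 (hx 1) (hx 3) (hx 4) (hm 0 1 (by decide)) (hm 2 3 (by decide)) (hm 3 4 (by decide))) (le_of_eq (by simp [Finset.prod_insert]))
    · exact le_trans (mono3 (hx 1) (hx 3) (hx 4) (hm 0 1 (by decide)) (hm 2 3 (by decide)) (hm 4 4 (by decide))) (le_of_eq (by simp [Finset.prod_insert]))
    · exact le_trans (mono3 (hx 1) (hx 3) (hx 4) (hm 0 1 (by decide)) (hm 3 3 (by decide)) (hm 4 4 (by decide))) (le_of_eq (by simp [Finset.prod_insert]))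
    · exact le_trans (mono3 (hx 1) (hx 3) (hx 4) (hm 1 1 (by decide)) (hm 2 3 (by decide)) (hm 3 4 (by decide))) (le_of_eq (by simp [Finset.prod_insert]))
    · exact le_trans (mono3 (hx 1) (hx 3) (hx 4) (hm 1 1 (by decide)) (hm 2 3 (by decide)) (hm 4 4 (by decide))) (le_of_eq (by simp [Finset.prod_insert]))
    · exact le_trans (mono3 (hx 1) (hx 3) (hx 4) (hm 1 1 (by decide)) (hm 3 3 (by decide)) (hm 4 4 (by decide))) (le_of_eq (by simp [Finset.prod_insert]))
    · exact absurd (by decide) hne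
  have hpq5 : x 2 * (x 3 * x 4) ≤ x 1 * (x 3 * x 4) :=
    mono3 (hx 2) (hx 3) (hx 4) (hm 1 2 (by decide)) le_rfl le_rfl
  have hs5 : ∑ t ∈ E.filter (fun t => (5 : Fin 6) ∉ t), ∏ i ∈ t, x i ≤
      (x 0 * (x 1 * x 2) + x 0 * (x 1 * x 3) + x 0 * (x 1 * x 4) + x 0 * (x 2 * x 3) + x 0 * (x 2 * x 4) + x 0 * (x 3 * x 4) + x 1 * (x 2 * x 3) + x 1 * (x 2 * x 4) + x 1 * (x 3 * x 4) + x 2 * (x 3 * x 4)) - (x 2 * (x 3 * x 4) + x 1 * (x 3 * x 4)) := by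
    have hm2 := hmiss 5
    rw [hB5] at hm2
    obtain ⟨t1, ht1, t2, ht2, hne12⟩ := Finset.one_lt_card.1 (lt_of_lt_of_le one_lt_two hm2)
    have ht1B := (Finset.mem_filter.1 ht1).1
    have ht1E := (Finset.mem_filter.1 ht1).2
    have ht2B := (Finset.mem_filter.1 ht2).1
    have ht2E := (Finset.mem_filter.1 ht2).2
    have hSlit : ∑ t ∈ ({{0,1,2},{0,1,3},{0,1,4},{0,2,3},{0,2,4},{0,3,4},{1,2,3},{1,2,4},{1,3,4},{2,3,4}} : Finset (Finset (Fin 6))), ∏ i ∈ t, x i = x 0 * (x 1 * x 2) + x 0 * (x 1 * x 3) + x 0 * (x 1 * x 4) + x 0 * (x 2 * x 3) + x 0 * (x 2 * x 4) + x 0 * (x 3 * x 4) + x 1 * (x 2 * x 3) + x 1 * (x 2 * x 4) + x 1 * (x 3 * x 4) + x 2 * (x 3 * x 4) := by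
      simp (config := { decide := true }) [Finset.sum_insert, Finset.prod_insert]
      ring
    have hsub : E.filter (fun t => (5 : Fin 6) ∉ t) ⊆ ({{0,1,2},{0,1,3},{0,1,4},{0,2,3},{0,2,4},{0,3,4},{1,2,3},{1,2,4},{1,3,4},{2,3,4}} : Finset (Finset (Fin 6))) \ {t1, t2} := by
      intro e he
      obtain ⟨heE, hk⟩ := Finset.mem_filter.1 he
      refine Finset.mem_sdiff.2 ⟨?_, ?_⟩
      · rw [← hB5]
        refine Finset.mem_powersetCard.2 ⟨?_, hcard3 e heE⟩
        intro y hy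
        simp only [Finset.mem_sdiff, Finset.mem_univ, Finset.mem_singleton, true_and]
        rintro rfl; exact hk hy
      · simp only [Finset.mem_insert, Finset.mem_singleton]
        rintro (rfl | rfl)
        exacts [ht1E heE, ht2E heE]
    have hstep : ∑ t ∈ E.filter (fun t => (5 : Fin 6) ∉ t), ∏ i ∈ t, x i ≤
        ∑ t ∈ (({{0,1,2},{0,1,3},{0,1,4},{0,2,3},{0,2,4},{0,3,4},{1,2,3},{1,2,4},{1,3,4},{2,3,4}} : Finset (Finset (Fin 6))) \ {t1, t2}), ∏ i ∈ t, x i :=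
      Finset.sum_le_sum_of_subset_of_nonneg hsub (fun t _ _ => Finset.prod_nonneg (fun i _ => hx i))
    have hsub12 : ({t1, t2} : Finset (Finset (Fin 6))) ⊆ ({{0,1,2},{0,1,3},{0,1,4},{0,2,3},{0,2,4},{0,3,4},{1,2,3},{1,2,4},{1,3,4},{2,3,4}} : Finset (Finset (Fin 6))) := by
      intro s hs
      simp only [Finset.mem_insert, Finset.mem_singleton] at hs
      rcases hs with rfl | rfl
      exacts [ht1B, ht2B]
    rw [Finset.sum_sdiff_eq_sub hsub12, Finset.sum_pair hne12, hSlit] at hstep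
    have hlow : x 2 * (x 3 * x 4) + x 1 * (x 3 * x 4) ≤ (∏ i ∈ t1, x i) + ∏ i ∈ t2, x i := by
      by_cases hb1 : t1 = ({2,3,4} : Finset (Fin 6))
      · have h2 : x 1 * (x 3 * x 4) ≤ ∏ i ∈ t2, x i := L2_5 t2 ht2B (fun h => hne12 (hb1.trans h.symm))
        have h1 : (∏ i ∈ t1, x i) = x 2 * (x 3 * x 4) := by rw [hb1]; simp [Finset.prod_insert]
        linarith
      · by_cases hb2 : t2 = ({2,3,4} : Finset (Fin 6))
        · have h1 : x 1 * (x 3 * x 4) ≤ ∏ i ∈ t1, x i := L2_5 t1 ht1B hb1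
          have h2 : (∏ i ∈ t2, x i) = x 2 * (x 3 * x 4) := by rw [hb2]; simp [Finset.prod_insert]
          linarith
        · have h1 : x 1 * (x 3 * x 4) ≤ ∏ i ∈ t1, x i := L2_5 t1 ht1B hb1
          have h2 : x 1 * (x 3 * x 4) ≤ ∏ i ∈ t2, x i := L2_5 t2 ht2B hb2
          linarith
    linarith
  -- double counting
  have hdc : ∑ k : Fin 6, ∑ t ∈ E.filter (fun t => k ∉ t), ∏ i ∈ t, x i
      = 3 * ∑ t ∈ E, ∏ i ∈ t, x i := by
    simp_rw [Finset.sum_filter]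
    rw [Finset.sum_comm]
    have inner : ∀ t ∈ E, (∑ k : Fin 6, if k ∉ t then (∏ i ∈ t, x i) else 0)
        = 3 * ∏ i ∈ t, x i := by
      intro t ht
      rw [← Finset.sum_filter]
      have hfc : (univ.filter (fun k : Fin 6 => k ∉ t)) = tᶜ := by
        ext k; simp
      rw [hfc, Finset.sum_const, Finset.card_compl, hcard3 t ht]
      norm_num
    rw [Finset.sum_congr rfl inner, ← Finset.mul_sum]
  have hfin := key_ineq (x 0) (x 1) (x 2) (x 3) (x 4) (x 5)
    (hm 0 1 (by omega)) (hm 1 2 (by omega)) (hm 2 3 (by omega)) (hm 3 4 (by omega))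
    (hm 4 5 (by omega)) h5 hsum
  have hsum6 : ∑ k : Fin 6, ∑ t ∈ E.filter (fun t => k ∉ t), ∏ i ∈ t, x i
      = (∑ t ∈ E.filter (fun t => (0:Fin 6) ∉ t), ∏ i ∈ t, x i)
      + (∑ t ∈ E.filter (fun t => (1:Fin 6) ∉ t), ∏ i ∈ t, x i)
      + (∑ t ∈ E.filter (fun t => (2:Fin 6) ∉ t), ∏ i ∈ t, x i)
      + (∑ t ∈ E.filter (fun t => (3:Fin 6) ∉ t), ∏ i ∈ t, x i)
      + (∑ t ∈ E.filter (fun t => (4:Fin 6) ∉ t), ∏ i ∈ t, x i)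
      + (∑ t ∈ E.filter (fun t => (5:Fin 6) ∉ t), ∏ i ∈ t, x i) := by
    rw [Fin.sum_univ_six]
  linarith [hs0, hs1, hs2, hs3, hs4, hs5]



theorem lag_le (G : ThreeGraph) (hcard : G.verts.card = 6)
    (hmissn : ∀ v ∈ G.verts, 2 ≤ (((G.verts \ {v}).powersetCard 3).filter (· ∉ G.edges)).card) :
    G.lag ≤ 2 / 25 := by
  apply Real.sSup_le _ (by norm_num)
  rintro y ⟨w, ⟨hw0, hw1⟩, rfl⟩
  -- build sorted enumeration g of the vertices
  set g0 : Fin 6 → ℕ := fun i => (G.verts.orderIsoOfFin hcard i : ℕ) with hg0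
  have hg0inj : Function.Injective g0 :=
    fun i j h => (G.verts.orderIsoOfFin hcard).injective (Subtype.val_injective h)
  have hg0mem : ∀ i, g0 i ∈ G.verts := fun i => (G.verts.orderIsoOfFin hcard i).2
  set σ : Equiv.Perm (Fin 6) := Tuple.sort (fun i => w (g0 i)) with hσ
  set g : Fin 6 → ℕ := fun i => g0 (σ i.rev) with hg
  have hginj : Function.Injective g :=
    fun i j h => Fin.rev_injective (σ.injective (hg0inj h))
  have hgmem : ∀ i, g i ∈ G.verts := fun i => hg0mem _
  set x : Fin 6 → ℝ := fun i => w (g i) with hx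
  have hmono : ∀ i j : Fin 6, i ≤ j → x j ≤ x i := by
    intro i j hij
    have := Tuple.monotone_sort (fun i => w (g0 i)) (Fin.rev_le_rev.2 hij)
    exact this
  have h5 : 0 ≤ x 5 := hw0 _ (hgmem 5)
  have himg : univ.image g = G.verts := by
    apply Finset.eq_of_subset_of_card_le
    · intro v hv
      obtain ⟨i, _, rfl⟩ := Finset.mem_image.1 hv
      exact hgmem i
    · rw [Finset.card_image_of_injective _ hginj, Finset.card_univ, hcard]
      simp
  have hsum : x 0 + x 1 + x 2 + x 3 + x 4 + x 5 = 1 := by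
    have : ∑ i : Fin 6, x i = ∑ v ∈ G.verts, w v := by
      rw [← himg, Finset.sum_image (fun a _ b _ h => hginj h)]
    rw [← Fin.sum_univ_six x, this, hw1]
  set E' : Finset (Finset (Fin 6)) :=
    ((univ : Finset (Fin 6)).powersetCard 3).filter (fun t => t.image g ∈ G.edges) with hE'
  have hcard3 : ∀ t ∈ E', t.card = 3 := by
    intro t ht
    exact (Finset.mem_powersetCard.1 (Finset.mem_filter.1 ht).1).2
  have htrans : G.lagFun w = ∑ t ∈ E', ∏ i ∈ t, x i := by
    unfold HyperGraph.lagFun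
    symm
    apply Finset.sum_bij (i := fun t _ => t.image g)
    · intro t ht
      exact (Finset.mem_filter.1 ht).2
    · intro t1 h1 t2 h2 heq
      exact Finset.image_injective hginj heq
    · intro e he
      have hesub : e ⊆ univ.image g := himg ▸ G.edges_sub e he
      obtain ⟨t, htsub, hte⟩ := Finset.subset_image_iff.1 hesub
      have htcard : t.card = 3 := by
        have := G.card_eq e he
        rw [← hte, Finset.card_image_of_injective _ hginj] at this
        exact this
      refine ⟨t, Finset.mem_filter.2 ⟨Finset.mem_powersetCard.2 ⟨htsub, htcard⟩, ?_⟩, hte⟩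
      rw [hte]; exact he
    · intro t ht
      rw [Finset.prod_image (fun a _ b _ h => hginj h)]
  have hmiss : ∀ k : Fin 6,
      2 ≤ ((((univ : Finset (Fin 6)) \ {k}).powersetCard 3).filter (· ∉ E')).card := by
    intro k
    have hkey : ((G.verts \ {g k}).powersetCard 3).filter (· ∉ G.edges)
        = Finset.image (Finset.image g) ((((univ : Finset (Fin 6)) \ {k}).powersetCard 3).filter (· ∉ E')) := by
      ext s
      constructor
      · intro hs
        obtain ⟨hsP, hsE⟩ := Finset.mem_filter.1 hs
        obtain ⟨hssub, hscard⟩ := Finset.mem_powersetCard.1 hsP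
        have hsub' : s ⊆ univ.image g := by
          intro y hy
          exact himg ▸ (Finset.mem_sdiff.1 (hssub hy)).1
        obtain ⟨t, htsub, hte⟩ := Finset.subset_image_iff.1 hsub'
        have htcard : t.card = 3 := by
          rw [← hte, Finset.card_image_of_injective _ hginj] at hscard
          exact hscard
        have hknot : k ∉ t := by
          intro hk
          have : g k ∈ s := hte ▸ Finset.mem_image_of_mem g hk
          exact (Finset.mem_sdiff.1 (hssub this)).2 (Finset.mem_singleton_self _)
        refine Finset.mem_image.2 ⟨t, Finset.mem_filter.2 ⟨?_, ?_⟩, hte⟩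
        · refine Finset.mem_powersetCard.2 ⟨?_, htcard⟩
          intro y hy
          exact Finset.mem_sdiff.2 ⟨Finset.mem_univ y, by
            simp only [Finset.mem_singleton]; rintro rfl; exact hknot hy⟩
        · intro htE'
          exact hsE (hte ▸ (Finset.mem_filter.1 htE').2)
      · intro hs
        obtain ⟨t, ht, rfl⟩ := Finset.mem_image.1 hs
        obtain ⟨htP, htE'⟩ := Finset.mem_filter.1 ht
        obtain ⟨htsub, htcard⟩ := Finset.mem_powersetCard.1 htP
        have hknot : k ∉ t := fun hk => (Finset.mem_sdiff.1 (htsub hk)).2 (Finset.mem_singleton_self _)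
        refine Finset.mem_filter.2 ⟨Finset.mem_powersetCard.2 ⟨?_, ?_⟩, ?_⟩
        · intro y hy
          obtain ⟨i, hit, rfl⟩ := Finset.mem_image.1 hy
          refine Finset.mem_sdiff.2 ⟨hgmem i, ?_⟩
          simp only [Finset.mem_singleton]
          intro h
          exact hknot (hginj h ▸ hit)
        · rw [Finset.card_image_of_injective _ hginj]; exact htcard
        · intro hedge
          exact htE' (Finset.mem_filter.2 ⟨Finset.mem_powersetCard.2
            ⟨Finset.subset_univ t, htcard⟩, hedge⟩)
    have hc := hmissn (g k) (hgmem k)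
    rw [hkey, Finset.card_image_of_injective _ (Finset.image_injective hginj)] at hc
    exact hc
  rw [htrans]
  exact fin6_bound x hmono h5 hsum E' hcard3 hmiss


/-- Every `K_5^{3−}`-free 3-graph on 6 vertices has at most 16 edges and Lagrangian at
most `2/25` (the Lagrangian of `K_5^3`). -/
theorem K53minus_free_six_verts (G : ThreeGraph) (hcard : G.verts.card = 6)
    (hfree : G.Free K53minus) : G.edges.card ≤ 16 ∧ G.lag ≤ 2 / 25 := by
  have hmiss : ∀ v ∈ G.verts,
      2 ≤ (((G.verts \ {v}).powersetCard 3).filter (· ∉ G.edges)).card :=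
    fun v hv => free_missing G hcard hfree v hv
  exact ⟨edge_bound G hcard hmiss, lag_le G hcard hmiss⟩
end
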